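/- arXiv:1605.04118 — 10 statements merged into one kernel-verified Lean document; each statement's English description precedes it below -/
import Mathlib

section
/- Let D be a division ring whose center Z(D) is infinite, and suppose there are only finitely many conjugacy classes of non-central elements of D (i.e. the set {a^D : a ∈ D ∖ Z(D)} of conjugacy classes is finite). Then for every non-central b ∈ D the center Z(D) is contained in b^D − b; that is, for every z ∈ Z(D) there exists x ∈ D∖{0} with x⁻¹bx − b = z. -/
namespace Stmt1Aux

variable {D : Type*} [DivisionRing D]

/-- conjugacy relation -/
def P (a c : D) : Prop := ∃ x : D, x ≠ 0 ∧ x⁻¹ * a * x = c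

lemma P_refl (a : D) : P a a := ⟨1, one_ne_zero, by simp⟩

lemma P_symm {a c : D} (h : P a c) : P c a := by
  obtain ⟨x, hx, h⟩ := h
  refine ⟨x⁻¹, inv_ne_zero hx, ?_⟩
  rw [inv_inv, ← h, ← mul_assoc, ← mul_assoc, mul_inv_cancel₀ hx, one_mul, mul_assoc,
    mul_inv_cancel₀ hx, mul_one]

lemma P_trans {a c d : D} (h1 : P a c) (h2 : P c d) : P a d := by
  obtain ⟨x, hx, h1⟩ := h1
  obtain ⟨y, hy, h2⟩ := h2
  refine ⟨x * y, mul_ne_zero hx hy, ?_⟩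
  rw [mul_inv_rev, ← h2, ← h1]
  noncomm_ring

lemma class_eq {a c : D} (h : P a c) : {d | P a d} = {d | P c d} := by
  ext d
  exact ⟨fun h' => P_trans (P_symm h) h', fun h' => P_trans h h'⟩

lemma cent_inv {c : D} (hc : c ∈ Subring.center D) : c⁻¹ ∈ Subring.center D := by
  rcases eq_or_ne c 0 with rfl | h0
  · simpa using hc
  · rw [Subring.mem_center_iff] at hc ⊢
    intro g
    have h1 : c * (g * c⁻¹) = g := by
      rw [← mul_assoc, ← hc g, mul_assoc, mul_inv_cancel₀ h0, mul_one]
    calc g * c⁻¹ = c⁻¹ * (c * (g * c⁻¹)) := by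
                    rw [← mul_assoc, inv_mul_cancel₀ h0, one_mul]
      _ = c⁻¹ * g := by rw [h1]

lemma cent_comm {c : D} (hc : c ∈ Subring.center D) (g : D) : c * g = g * c :=
  (Subring.mem_center_iff.mp hc g).symm

lemma conj_central {x s : D} (hx : x ≠ 0) (hs : s ∈ Subring.center D) :
    x⁻¹ * s * x = s := by
  rw [mul_assoc, cent_comm hs x, ← mul_assoc, inv_mul_cancel₀ hx, one_mul]

lemma conj_add {x a s : D} (hx : x ≠ 0) (hs : s ∈ Subring.center D) :
    x⁻¹ * (a + s) * x = x⁻¹ * a * x + s := by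
  rw [mul_add, add_mul, conj_central hx hs]

lemma conj_mul_central {x a l : D} (hl : l ∈ Subring.center D) :
    x⁻¹ * (l * a) * x = l * (x⁻¹ * a * x) := by
  rw [← mul_assoc, ← mul_assoc, ← cent_comm hl x⁻¹, mul_assoc, mul_assoc, mul_assoc, mul_assoc]

lemma P_translate {a c s : D} (hs : s ∈ Subring.center D) (h : P a c) : P (a + s) (c + s) := by
  obtain ⟨x, hx, h⟩ := h
  exact ⟨x, hx, by rw [conj_add hx hs, h]⟩

/-- the difference set predicate: b + z is conjugate to b -/
def Hp (b z : D) : Prop := P b (b + z)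

lemma Hp_add {b s t : D} (hs : s ∈ Subring.center D) (h1 : Hp b s) (h2 : Hp b t) :
    Hp b (s + t) := by
  have h3 : P (b + s) (b + t + s) := P_translate hs h2
  have := P_trans h1 h3
  rwa [add_assoc, add_comm t s] at this

lemma Hp_neg {b s : D} (hs : s ∈ Subring.center D) (h : Hp b s) : Hp b (-s) := by
  have h1 : P (b + s) b := P_symm h
  have h2 : P (b + s + -s) (b + -s) := P_translate (Subring.neg_mem _ hs) h1
  rwa [add_neg_cancel_right] at h2

lemma Hp_diff {b s t : D} (hs : s ∈ Subring.center D) (h : P (b + s) (b + t)) :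
    Hp b (t - s) := by
  obtain ⟨x, hx, h⟩ := h
  rw [conj_add hx hs] at h
  refine ⟨x, hx, ?_⟩
  rw [eq_sub_iff_add_eq.mpr h]
  noncomm_ring

lemma Hp_diff_rev {b s t : D} (hs : s ∈ Subring.center D) (h : Hp b (t - s)) :
    P (b + s) (b + t) := by
  obtain ⟨x, hx, h⟩ := h
  refine ⟨x, hx, ?_⟩
  rw [conj_add hx hs, h]
  noncomm_ring

lemma Hp_scale {b l s : D} (hl : l ∈ Subring.center D) (hlb : P b (l * b))
    (hs : s ∈ Subring.center D) (h : Hp b s) : Hp b (l * s) := by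
  obtain ⟨x, hx, hxe⟩ := h
  have hls : l * s ∈ Subring.center D := Subring.mul_mem _ hl hs
  -- conjugating l*b by x gives l*b + l*s
  have h1 : P (l * b) (l * b + l * s) :=
    ⟨x, hx, by rw [conj_mul_central hl, hxe, mul_add]⟩
  -- translate hlb by l*s
  have h3 : P (b + l * s) (l * b + l * s) := P_translate hls hlb
  exact P_trans (P_trans hlb h1) (P_symm h3)

end Stmt1Aux

open Stmt1Aux

/-- Let D be a division ring whose center Z(D) is infinite, with only finitely many conjugacy
classes of non-central elements. Then for every non-central b ∈ D the center Z(D) is contained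
in b^D − b. -/
theorem stmt_1 (D : Type*) [DivisionRing D]
    (hZinf : (Subring.center D : Set D).Infinite)
    (hfin : {S : Set D | ∃ a : D, a ∉ Subring.center D ∧
      S = {b : D | ∃ x : D, x ≠ 0 ∧ x⁻¹ * a * x = b}}.Finite) :
    ∀ b : D, b ∉ Subring.center D →
      ∀ z ∈ Subring.center D, ∃ x : D, x ≠ 0 ∧ x⁻¹ * b * x - b = z := by
  intro b hb z hz
  set Cset : Set (Set D) := {S : Set D | ∃ a : D, a ∉ Subring.center D ∧
      S = {b : D | ∃ x : D, x ≠ 0 ∧ x⁻¹ * a * x = b}} with hCset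
  set Z := Subring.center D with hZdef
  -- the class map for translated elements
  set φ : D → Set D := fun t => {c | P (b + t) c} with hφ
  have hφmem : ∀ t ∈ Z, φ t ∈ Cset := by
    intro t ht
    refine ⟨b + t, fun hbt => hb ?_, rfl⟩
    have := Subring.sub_mem _ hbt ht
    simpa using this
  -- the class map for scaled elements
  set χ : D → Set D := fun c => {d | P (c * b) d} with hχ
  have hχmem : ∀ c ∈ Z, c ≠ 0 → χ c ∈ Cset := by
    intro c hc hc0
    refine ⟨c * b, fun hcb => hb ?_, rfl⟩
    have := Subring.mul_mem _ (cent_inv hc) hcb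
    rwa [← mul_assoc, inv_mul_cancel₀ hc0, one_mul] at this
  haveI hCfin : Finite ↥Cset := hfin.to_subtype
  -- Λ : the set of central λ with b conjugate to λ b; it is infinite
  set Λ : Set D := {l | l ∈ Z ∧ P b (l * b)} with hΛ
  have hΛinf : Λ.Infinite := by
    have hZ0 : (Z \ {0} : Set D).Infinite := hZinf.diff (Set.finite_singleton 0)
    haveI := hZ0.to_subtype
    set F : ↥(Z \ {0} : Set D) → ↥Cset :=
      fun c => ⟨χ c.1, hχmem c.1 c.2.1 c.2.2⟩ with hF
    obtain ⟨q, hq⟩ := Finite.exists_infinite_fiber F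
    haveI := hq
    obtain ⟨c₀⟩ : Nonempty ↥(F ⁻¹' {q}) := inferInstance
    have hc₀Z : (c₀.1 : D) ∈ Z := c₀.1.2.1
    have hc₀0 : (c₀.1 : D) ≠ 0 := c₀.1.2.2
    refine Set.infinite_of_injective_forall_mem
      (f := fun c : ↥(F ⁻¹' {q}) => (c.1 : D) * (c₀.1 : D)⁻¹) ?_ ?_
    · intro c c' h
      have : (c.1 : D) = (c'.1 : D) := by
        have := mul_right_cancel₀ (inv_ne_zero hc₀0) h
        exact this
      exact Subtype.ext (Subtype.ext this)
    · intro c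
      have hcZ : (c.1 : D) ∈ Z := c.1.2.1
      refine ⟨Subring.mul_mem _ hcZ (cent_inv hc₀Z), ?_⟩
      -- χ c = χ c₀ from fiber membership
      have hqc : F c.1 = q := c.2
      have hqc₀ : F c₀.1 = q := c₀.2
      have hχeq : χ (c.1 : D) = χ (c₀.1 : D) := by
        have := hqc.trans hqc₀.symm
        exact congrArg Subtype.val this
      have hmem : ((c.1 : D) * b) ∈ χ (c₀.1 : D) := by
        rw [← hχeq]; exact P_refl _
      obtain ⟨x, hx, he⟩ := hmem
      rw [conj_mul_central hc₀Z] at he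
      refine ⟨x, hx, ?_⟩
      have h2 : x⁻¹ * b * x = ((c₀.1 : D))⁻¹ * ((c.1 : D) * b) := by
        rw [← he, ← mul_assoc, inv_mul_cancel₀ hc₀0, one_mul]
      show x⁻¹ * b * x = (c.1 : D) * ((c₀.1 : D))⁻¹ * b
      rw [h2, ← mul_assoc, cent_comm (cent_inv hc₀Z) (c.1 : D)]
  -- the image of the center under φ is finite
  have hImsub : φ '' (Z : Set D) ⊆ Cset := by
    rintro _ ⟨t, ht, rfl⟩
    exact hφmem t ht
  have hImfin : (φ '' (Z : Set D)).Finite := hfin.subset hImsub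
  haveI := hImfin.to_subtype
  haveI := hΛinf.to_subtype
  -- representative choice
  set wfun : ↥(φ '' (Z : Set D)) → D := fun q => q.2.choose with hwfun
  have hwspec : ∀ q : ↥(φ '' (Z : Set D)), wfun q ∈ Z ∧ φ (wfun q) = q.1 :=
    fun q => q.2.choose_spec
  -- the pigeonhole map
  set ψ : ↥Λ → (↥(φ '' (Z : Set D)) → ↥(φ '' (Z : Set D))) :=
    fun l q => ⟨φ ((l : D) * wfun q),
      ⟨(l : D) * wfun q, Subring.mul_mem _ l.2.1 (hwspec q).1, rfl⟩⟩ with hψ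
  obtain ⟨lam, mu, hne, hpsi⟩ := Finite.exists_ne_map_eq_of_infinite ψ
  -- the key step: (lam - mu) * w ∈ H for all central w
  have key : ∀ w ∈ Z, Hp b (((lam : D) - (mu : D)) * w) := by
    intro w hw
    set q : ↥(φ '' (Z : Set D)) := ⟨φ w, ⟨w, hw, rfl⟩⟩ with hqdef
    set s : D := wfun q with hs
    have hsZ : s ∈ Z := (hwspec q).1
    have hφs : φ s = φ w := (hwspec q).2
    -- from φ s = φ w : w - s ∈ H
    have h1 : Hp b (w - s) := by
      refine Hp_diff hsZ ?_
      have : (b + w) ∈ φ s := by rw [hφs]; exact P_refl _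
      exact this
    -- from ψ lam = ψ mu : φ (lam * s) = φ (mu * s)
    have h2 : φ ((lam : D) * s) = φ ((mu : D) * s) := by
      have := congrFun hpsi q
      exact congrArg Subtype.val this
    have h3 : Hp b ((mu : D) * s - (lam : D) * s) := by
      refine Hp_diff (Subring.mul_mem _ lam.2.1 hsZ) ?_
      have : (b + (mu : D) * s) ∈ φ ((lam : D) * s) := by rw [h2]; exact P_refl _
      exact this
    have h6 : Hp b ((lam : D) * s - (mu : D) * s) := by
      have := Hp_neg (Subring.sub_mem _ (Subring.mul_mem _ mu.2.1 hsZ)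
        (Subring.mul_mem _ lam.2.1 hsZ)) h3
      rwa [neg_sub] at this
    have h4 : Hp b ((lam : D) * (w - s)) :=
      Hp_scale lam.2.1 lam.2.2 (Subring.sub_mem _ hw hsZ) h1
    have h5 : Hp b ((mu : D) * (s - w)) := by
      have hn : Hp b (s - w) := by
        have := Hp_neg (Subring.sub_mem _ hw hsZ) h1
        rwa [neg_sub] at this
      exact Hp_scale mu.2.1 mu.2.2 (Subring.sub_mem _ hsZ hw) hn
    have heq : ((lam : D) - (mu : D)) * w =
        (lam : D) * (w - s) + ((lam : D) * s - (mu : D) * s) + (mu : D) * (s - w) := by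
      noncomm_ring
    rw [heq]
    have hA : (lam : D) * (w - s) ∈ Z := Subring.mul_mem _ lam.2.1 (Subring.sub_mem _ hw hsZ)
    have hB : (lam : D) * s - (mu : D) * s ∈ Z :=
      Subring.sub_mem _ (Subring.mul_mem _ lam.2.1 hsZ) (Subring.mul_mem _ mu.2.1 hsZ)
    exact Hp_add (Subring.add_mem _ hA hB) (Hp_add hA h4 h6) h5
  -- conclude
  have hν0 : (lam : D) - (mu : D) ≠ 0 := by
    refine sub_ne_zero.mpr fun h => hne (Subtype.ext h)
  have hνZ : (lam : D) - (mu : D) ∈ Z := Subring.sub_mem _ lam.2.1 mu.2.1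
  have hwz : ((lam : D) - (mu : D))⁻¹ * z ∈ Z := Subring.mul_mem _ (cent_inv hνZ) hz
  have hpz : Hp b z := by
    have := key _ hwz
    rwa [← mul_assoc, mul_inv_cancel₀ hν0, one_mul] at this
  obtain ⟨x, hx, he⟩ := hpz
  exact ⟨x, hx, by rw [he, add_sub_cancel_left]⟩
end

section
/- Let D be a division ring of prime characteristic p > 0 and let a, x ∈ D satisfy ax − xa = 1. Then a^p commutes with x. Consequently, there exist no elements a, x in such a D with ax − xa = 1 and C_D(a) = C_D(a^p). -/
/-- Let D be a division ring of prime characteristic p > 0 and let a, x ∈ D satisfy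
ax − xa = 1. Then a^p commutes with x. Consequently, there exist no elements a, x in such a D
with ax − xa = 1 and C_D(a) = C_D(a^p). -/
theorem stmt_2 (D : Type*) [DivisionRing D] (p : ℕ) (hp : p.Prime) [CharP D p] :
    (∀ a x : D, a * x - x * a = 1 → a ^ p * x = x * a ^ p) ∧
    ¬ ∃ a x : D, a * x - x * a = 1 ∧
      Subring.centralizer {a} = Subring.centralizer ({a ^ p} : Set D) := by
  have key : ∀ a x : D, a * x - x * a = 1 → a ^ p * x = x * a ^ p := by
    intro a x h
    have hax : a * x = x * a + 1 := by
      have := sub_eq_iff_eq_add.mp h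
      rw [this, add_comm]
    have hcomm : ∀ n : ℕ, a ^ (n + 1) * x - x * a ^ (n + 1) = ((n : D) + 1) * a ^ n := by
      intro n
      induction n with
      | zero => simpa using h
      | succ n ih =>
        have e1 : a ^ (n + 1) * x = ((n : D) + 1) * a ^ n + x * a ^ (n + 1) :=
          sub_eq_iff_eq_add.mp ih
        have : a ^ (n + 1 + 1) * x - x * a ^ (n + 1 + 1)
            = ((n : D) + 1) * a ^ n * a + a ^ (n + 1) := by
          calc a ^ (n + 1 + 1) * x - x * a ^ (n + 1 + 1)
              = a ^ (n + 1) * (a * x) - x * (a ^ (n + 1) * a) := by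
                rw [pow_succ, mul_assoc]
            _ = a ^ (n + 1) * (x * a + 1) - x * (a ^ (n + 1) * a) := by rw [hax]
            _ = (a ^ (n + 1) * x) * a + a ^ (n + 1) - x * a ^ (n + 1) * a := by
                noncomm_ring
            _ = (((n : D) + 1) * a ^ n + x * a ^ (n + 1)) * a + a ^ (n + 1)
                - x * a ^ (n + 1) * a := by rw [e1]
            _ = ((n : D) + 1) * a ^ n * a + a ^ (n + 1) := by noncomm_ring
        rw [this, mul_assoc, ← pow_succ]
        push_cast
        noncomm_ring
    have hp1 : p - 1 + 1 = p := Nat.succ_pred_eq_of_pos hp.pos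
    have := hcomm (p - 1)
    rw [hp1] at this
    have hpz : ((p - 1 : ℕ) : D) + 1 = 0 := by
      have : (((p - 1 : ℕ) + 1 : ℕ) : D) = 0 := by rw [hp1]; exact CharP.cast_eq_zero D p
      push_cast at this
      exact this
    rw [hpz, zero_mul, sub_eq_zero] at this
    exact this
  refine ⟨key, ?_⟩
  rintro ⟨a, x, h, hcent⟩
  have hx : x ∈ Subring.centralizer ({a ^ p} : Set D) := by
    rw [Subring.mem_centralizer_iff]
    rintro g hg
    rw [Set.mem_singleton_iff] at hg
    subst hg
    exact key a x h
  rw [← hcent, Subring.mem_centralizer_iff] at hx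
  have := hx a (Set.mem_singleton a)
  rw [this, sub_self] at h
  exact one_ne_zero h.symm
end

section
/- Let D be a division ring and let a, x ∈ D satisfy ax − xa = 1. Define σ_a on the nonzero elements of Z(C_D(x)) by σ_a(y) = y⁻¹ay − a. Then σ_a(y) lies in Z(C_D(x)) for every nonzero y ∈ Z(C_D(x)), σ_a(uv) = σ_a(u) + σ_a(v) for all nonzero u, v ∈ Z(C_D(x)), and σ_a(y) = 0 if and only if y ∈ C_D(a). In other words, σ_a is a group homomorphism from the multiplicative group Z(C_D(x))^× to the additive group of Z(C_D(x)) whose kernel is Z(C_D(x))^× ∩ C_D(a). -/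
/-- Let D be a division ring and a, x ∈ D with ax − xa = 1. Define σ_a(y) = y⁻¹ay − a on
nonzero elements of Z(C_D(x)). Then σ_a takes values in Z(C_D(x)), is additive on products,
and σ_a(y) = 0 iff y ∈ C_D(a). -/
theorem stmt_4 (D : Type*) [DivisionRing D] (a x : D) (h : a * x - x * a = 1) :
    let Z : Set D := {y : D | y * x = x * y ∧ ∀ u : D, u * x = x * u → y * u = u * y}
    (∀ y ∈ Z, y ≠ 0 → y⁻¹ * a * y - a ∈ Z) ∧
    (∀ u ∈ Z, ∀ v ∈ Z, u ≠ 0 → v ≠ 0 →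
      (u * v)⁻¹ * a * (u * v) - a = (u⁻¹ * a * u - a) + (v⁻¹ * a * v - a)) ∧
    (∀ y ∈ Z, y ≠ 0 → (y⁻¹ * a * y - a = 0 ↔ y * a = a * y)) := by
  intro Z
  have hax : a * x = x * a + 1 := sub_eq_iff_eq_add'.mp h
  -- [a, y] commutes with x whenever y does
  have L1 : ∀ y : D, y * x = x * y → (a * y - y * a) * x = x * (a * y - y * a) := by
    intro y hy
    calc (a * y - y * a) * x = a * (y * x) - y * (a * x) := by noncomm_ring
      _ = a * (x * y) - y * (x * a + 1) := by rw [hy, hax]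
      _ = (a * x) * y - (y * x) * a - y := by noncomm_ring
      _ = (x * a + 1) * y - (x * y) * a - y := by rw [hax, hy]
      _ = x * (a * y - y * a) := by noncomm_ring
  -- [a, y] commutes with every u ∈ C_D(x) whenever y ∈ Z
  have L2 : ∀ y ∈ Z, ∀ u : D, u * x = x * u → (a * y - y * a) * u = u * (a * y - y * a) := by
    intro y hy u hu
    have h1 : y * u = u * y := hy.2 u hu
    have h3 : y * (a * u - u * a) = (a * u - u * a) * y := hy.2 _ (L1 u hu)
    have key : (a * y - y * a) * u - u * (a * y - y * a) =
        (a * (y * u) - (y * u) * a) - (a * (u * y) - (u * y) * a)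
          - (y * (a * u - u * a) - (a * u - u * a) * y) := by noncomm_ring
    rw [h1, h3, sub_self, sub_self] at key
    exact sub_eq_zero.mp (by simpa using key)
  -- membership of σ_a(y) in Z
  have hmem : ∀ y ∈ Z, y ≠ 0 → y⁻¹ * a * y - a ∈ Z := by
    intro y hy hy0
    have hσ : y⁻¹ * a * y - a = y⁻¹ * (a * y - y * a) := by
      rw [mul_sub, ← mul_assoc, ← mul_assoc, inv_mul_cancel₀ hy0, one_mul]
    have hinvx : y⁻¹ * x = x * y⁻¹ := Commute.inv_left₀ hy.1
    constructor
    · rw [hσ, mul_assoc, L1 y hy.1, ← mul_assoc, hinvx, mul_assoc]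
    · intro u hu
      have hinvu : y⁻¹ * u = u * y⁻¹ := Commute.inv_left₀ (hy.2 u hu)
      rw [hσ, mul_assoc, L2 y hy u hu, ← mul_assoc, hinvu, mul_assoc]
  refine ⟨hmem, ?_, ?_⟩
  · intro u hu v hv hu0 hv0
    have hc : (u⁻¹ * a * u - a) * v = v * (u⁻¹ * a * u - a) :=
      (hmem u hu hu0).2 v hv.1
    have e2 : v⁻¹ * (u⁻¹ * a * u - a) * v = u⁻¹ * a * u - a := by
      rw [mul_assoc, hc, ← mul_assoc, inv_mul_cancel₀ hv0, one_mul]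
    rw [mul_inv_rev, ← e2]
    noncomm_ring
  · intro y _ hy0
    rw [sub_eq_zero, mul_assoc, inv_mul_eq_iff_eq_mul₀ hy0, eq_comm]
end

section
/- Let D be a division ring and let A be an additive subgroup of (D,+) of infinite index in D. Suppose there is a natural number k such that the index [A : A ∩ λA] is at most k for every λ ∈ D∖{0}, where λA = {λa : a ∈ A}. Then A is finite. -/
/-!
If `A ≠ 0`, every `x ∈ D` lies in `dA` for some `d`, and `[dA : A ∩ dA] = [A : A ∩ d⁻¹A] ≤ k`, so
`k! • x ∈ A`. When `k!` is invertible in `D` this forces `A = D`; otherwise `k! • x = 0` for all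
`x`, so finitely generated additive subgroups of `D` are finite.

In that case take a finite subgroup `E ≤ A` with `|E| ≥ 2k`. For each `d`, at least `|E|/k` of the
`w ∈ E` satisfy `dw ∈ A`; double counting over a finite subgroup `F` then yields `w ∈ E ∖ {0}`
with `[F : F ∩ Aw⁻¹] ≤ 2k`. Choosing `F` to contain enough coset representatives for each of the
finitely many candidates `w` shows that some `Aw⁻¹` has finite index in `D`, hence so does `A`.
-/

open AddSubgroup Finset

namespace AddSubgroup

section AddCommGroup

variable {G : Type*} [AddCommGroup G]

theorem finite_closure_of_nsmul_eq_zero {n : ℕ} (hn : n ≠ 0) (hG : ∀ x : G, n • x = 0)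
    {s : Set G} (hs : s.Finite) : (closure s : Set G).Finite := by
  induction s, hs using Set.Finite.induction_on with
  | empty => simp
  | @insert a t _ _ ih =>
    rw [Set.insert_eq, closure_union, ← zmultiples_eq_closure, add_normal]
    have ha : IsOfFinAddOrder a :=
      isOfFinAddOrder_iff_nsmul_eq_zero.2 ⟨n, n.pos_of_ne_zero hn, hG a⟩
    exact ha.finite_zmultiples.add ih

theorem exists_le_finite_le_card (hG : ∀ s : Set G, s.Finite → (closure s : Set G).Finite)
    {A : AddSubgroup G} (hA : (A : Set G).Infinite) (n : ℕ) :
    ∃ E ≤ A, (E : Set G).Finite ∧ n ≤ Nat.card E := by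
  obtain ⟨s, hsA, hs, rfl⟩ := hA.exists_subset_ncard_eq n
  refine ⟨closure s, (closure_le A).2 hsA, hG s hs, ?_⟩
  rw [← Nat.card_coe_set_eq]
  exact Set.ncard_le_ncard subset_closure (hG s hs)

theorem exists_finite_forall_lt_relIndex (H : AddSubgroup G) {n : ℕ}
    (h : H.index = 0 ∨ n < H.index) :
    ∃ s : Set G, s.Finite ∧ ∀ L : AddSubgroup G, (L : Set G).Finite → s ⊆ L →
      n < H.relIndex L := by
  obtain ⟨f, hf⟩ : ∃ f : Fin (n + 1) → G ⧸ H, Function.Injective f := by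
    rcases h with h | h
    · have := index_eq_zero_iff_infinite.1 h
      exact ⟨_, (Infinite.natEmbedding _).injective.comp Fin.val_injective⟩
    · have : Fintype (G ⧸ H) := fintypeOfIndexNeZero (by omega)
      obtain ⟨f⟩ := Function.Embedding.nonempty_of_card_le (α := Fin (n + 1)) (β := G ⧸ H)
        (by rwa [Fintype.card_fin, ← Nat.card_eq_fintype_card, ← index_eq_card])
      exact ⟨f, f.injective⟩
  refine ⟨Set.range fun i => (f i).out, Set.finite_range _, fun L hL hsL => ?_⟩
  have : Finite L := hL.to_subtype
  let φ := QuotientAddGroup.map (H.addSubgroupOf L) H L.subtype le_rfl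
  let g : Fin (n + 1) → L ⧸ H.addSubgroupOf L := fun i => (⟨(f i).out, hsL ⟨i, rfl⟩⟩ : L)
  have hφg : φ ∘ g = f := funext fun i => QuotientAddGroup.out_eq' (f i)
  simpa [relIndex, index_eq_card] using Nat.card_le_card_of_injective g (hφg ▸ hf).of_comp

theorem exists_index_le_of_forall_finite {ι : Type*} [Finite ι]
    (hG : ∀ s : Set G, s.Finite → (closure s : Set G).Finite)
    (H : ι → AddSubgroup G) {n : ℕ}
    (h : ∀ L : AddSubgroup G, (L : Set G).Finite → ∃ i, (H i).relIndex L ≤ n) :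
    ∃ i, (H i).index ≠ 0 ∧ (H i).index ≤ n := by
  by_contra! hH
  choose s hs hlt using fun i => (H i).exists_finite_forall_lt_relIndex (n := n)
    (by have := hH i; omega)
  have hfin := hG (⋃ i, s i) (Set.finite_iUnion hs)
  obtain ⟨i, hi⟩ := h _ hfin
  exact (hlt i _ hfin ((Set.subset_iUnion s i).trans subset_closure)).not_ge hi

end AddCommGroup

open scoped Classical in
theorem relIndex_mul_card_filter {G : Type*} [AddGroup G] (H K : AddSubgroup G) [Fintype K] :
    H.relIndex K * #{x : K | (x : G) ∈ H} = Nat.card K := by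
  rw [← index_mul_card (H.addSubgroupOf K), relIndex, ← Fintype.card_subtype,
    ← Nat.card_eq_fintype_card]
  rfl

/-- `[A : A ∩ d⁻¹A] ≤ k` for all `d`, with `d⁻¹A` read as the preimage `{x | d * x ∈ A}`
(so `d = 0` is allowed). -/
def MulLeftIndexBounded {R : Type*} [NonUnitalNonAssocRing R] (A : AddSubgroup R) (k : ℕ) :
    Prop :=
  ∀ d : R, (A.comap (AddMonoidHom.mulLeft d)).relIndex A ≠ 0 ∧
    (A.comap (AddMonoidHom.mulLeft d)).relIndex A ≤ k

namespace MulLeftIndexBounded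

section NonUnitalNonAssocRing

variable {R : Type*} [NonUnitalNonAssocRing R] {A : AddSubgroup R} {k : ℕ}

open scoped Classical in
theorem card_le_mul_card_filter (hA : A.MulLeftIndexBounded k) {E : AddSubgroup R} (hEA : E ≤ A)
    [Fintype E] (d : R) :
    Nat.card E ≤ k * #{w : E | (w : R) ∈ A.comap (AddMonoidHom.mulLeft d)} := by
  rw [← relIndex_mul_card_filter]
  gcongr
  exact (relIndex_le_of_le_right hEA (hA d).1).trans (hA d).2

theorem exists_relIndex_comap_mulRight_le (hA : A.MulLeftIndexBounded k)
    {E : AddSubgroup R} (hEA : E ≤ A) (hE : (E : Set R).Finite) (hEk : 2 * k ≤ Nat.card E)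
    (F : AddSubgroup R) (hF : (F : Set R).Finite) :
    ∃ w ∈ E, w ≠ 0 ∧ (A.comap (AddMonoidHom.mulRight w)).relIndex F ≤ 2 * k := by
  classical
  have := hE.fintype
  have := hF.fintype
  by_contra! hlarge
  let m : E → ℕ := fun w => #{d : F | (d : R) ∈ A.comap (AddMonoidHom.mulRight (w : R))}
  have hsum : ∑ d : F, #{w : E | (w : R) ∈ A.comap (AddMonoidHom.mulLeft (d : R))} =
      ∑ w, m w :=
    sum_card_bipartiteAbove_eq_sum_card_bipartiteBelow (fun (d : F) (w : E) => (d : R) * w ∈ A)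
  have hm0 : m 0 = Nat.card F := by simp [m, Nat.card_eq_fintype_card]
  have hm : ∀ w ∈ univ.erase (0 : E), (2 * k + 1) * m w ≤ Nat.card F := by
    intro w hw
    rw [← relIndex_mul_card_filter]
    gcongr
    exact hlarge w w.2 (by simpa using hw)
  have hcard : #(univ.erase (0 : E)) + 1 = Nat.card E := by
    rw [card_erase_of_mem (mem_univ _), card_univ, ← Nat.card_eq_fintype_card]
    have : 0 < Nat.card E := Nat.card_pos
    omega
  have hlower : Nat.card F * Nat.card E ≤ k * ∑ w, m w := by
    rw [← hsum, mul_sum]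
    calc Nat.card F * Nat.card E = ∑ _d : F, Nat.card E := by
          rw [sum_const, card_univ, smul_eq_mul, Nat.card_eq_fintype_card]
      _ ≤ _ := sum_le_sum fun d _ => hA.card_le_mul_card_filter hEA d
  have hupper : (2 * k + 1) * ∑ w ∈ univ.erase 0, m w ≤ #(univ.erase (0 : E)) * Nat.card F := by
    rw [mul_sum]
    exact (sum_le_sum hm).trans_eq (by rw [sum_const, smul_eq_mul])
  rw [← add_sum_erase _ _ (mem_univ 0), hm0] at hlower
  have hF : 0 < Nat.card F := Nat.card_pos
  have : (2 * k + 1) * Nat.card E ≤ (2 * k + 1) * k + k * #(univ.erase (0 : E)) := by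
    refine Nat.le_of_mul_le_mul_right ?_ hF
    nlinarith
  nlinarith

end NonUnitalNonAssocRing

variable {D : Type*} [DivisionRing D] {A : AddSubgroup D} {k : ℕ}

theorem factorial_nsmul_mem (hA : A.MulLeftIndexBounded k) {a : D} (ha : a ∈ A) (ha0 : a ≠ 0)
    (x : D) : k.factorial • x ∈ A := by
  have hx : x ∈ A.map (AddMonoidHom.mulLeft (x * a⁻¹)) :=
    ⟨a, ha, by simp [inv_mul_cancel_right₀ ha0]⟩
  obtain ⟨hne, hle⟩ := hA (x * a⁻¹)
  rw [relIndex_comap] at hne hle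
  obtain ⟨m, hm⟩ := Nat.dvd_factorial (Nat.pos_of_ne_zero hne) hle
  rw [hm, mul_nsmul]
  exact A.nsmul_mem (A.nsmul_relIndex_mem hx) m

theorem index_ne_zero (hA : A.MulLeftIndexBounded k)
    (hD : ∀ s : Set D, s.Finite → (closure s : Set D).Finite) (hAinf : (A : Set D).Infinite) :
    A.index ≠ 0 := by
  obtain ⟨E, hEA, hE, hEk⟩ := exists_le_finite_le_card hD hAinf (2 * k)
  have : Finite {w // w ∈ E ∧ w ≠ 0} := (hE.subset fun _ hw => hw.1).to_subtype
  obtain ⟨⟨w, _, hw0⟩, hw, -⟩ := exists_index_le_of_forall_finite hD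
    (fun w : {w // w ∈ E ∧ w ≠ 0} => A.comap (AddMonoidHom.mulRight w.1)) fun F hF => by
      obtain ⟨w, hwE, hw0, hw⟩ := hA.exists_relIndex_comap_mulRight_le hEA hE hEk F hF
      exact ⟨⟨w, hwE, hw0⟩, hw⟩
  rwa [index_comap_of_surjective _ (mul_right_surjective₀ hw0)] at hw

end MulLeftIndexBounded

variable {D : Type*} [DivisionRing D] {A : AddSubgroup D}

theorem eq_top_of_forall_nsmul_mem {n : ℕ} (hn : (n : D) ≠ 0) (h : ∀ x : D, n • x ∈ A) :
    A = ⊤ :=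
  eq_top_iff.2 fun x _ => by simpa [nsmul_eq_mul, mul_inv_cancel_left₀ hn] using h ((n : D)⁻¹ * x)

theorem mulLeftIndexBounded_of_forall_ne_zero {k : ℕ}
    (hk : ∀ l : D, l ≠ 0 →
      ((A ⊓ A.map (AddMonoidHom.mulLeft l)).addSubgroupOf A).index ≠ 0 ∧
      ((A ⊓ A.map (AddMonoidHom.mulLeft l)).addSubgroupOf A).index ≤ k) :
    A.MulLeftIndexBounded k := by
  have hcomap : ∀ d : D, d ≠ 0 →
      A.comap (AddMonoidHom.mulLeft d) = A.map (AddMonoidHom.mulLeft d⁻¹) := fun d hd => by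
    ext x
    refine ⟨fun hx => ⟨d * x, hx, inv_mul_cancel_left₀ hd x⟩, ?_⟩
    rintro ⟨a, ha, rfl⟩
    simpa [mem_comap, mul_inv_cancel_left₀ hd] using ha
  have hk' : ∀ d : D, d ≠ 0 → (A.comap (AddMonoidHom.mulLeft d)).relIndex A ≠ 0 ∧
      (A.comap (AddMonoidHom.mulLeft d)).relIndex A ≤ k := fun d hd => by
    rw [hcomap d hd, ← inf_relIndex_left]
    exact hk d⁻¹ (inv_ne_zero hd)
  intro d
  rcases eq_or_ne d 0 with rfl | hd
  · have htop : A.comap (AddMonoidHom.mulLeft (0 : D)) = ⊤ :=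
      eq_top_iff.2 fun x _ => by simp [mem_comap]
    rw [htop, relIndex_top_left]
    have := hk' 1 one_ne_zero
    omega
  · exact hk' d hd

end AddSubgroup

/-- Let D be a division ring and A an additive subgroup of infinite index in D. If there is a
natural number k such that the index [A : A ∩ λA] is at most k for every λ ∈ D∖{0}, then A is
finite. -/
theorem stmt_6 (D : Type*) [DivisionRing D] (A : AddSubgroup D)
    (hinf : A.index = 0)
    (hk : ∃ k : ℕ, ∀ l : D, l ≠ 0 →
      ((A ⊓ A.map (AddMonoidHom.mulLeft l)).addSubgroupOf A).index ≠ 0 ∧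
      ((A ⊓ A.map (AddMonoidHom.mulLeft l)).addSubgroupOf A).index ≤ k) :
    (A : Set D).Finite := by
  obtain ⟨k, hk⟩ := hk
  have hA := mulLeftIndexBounded_of_forall_ne_zero hk
  refine Set.not_infinite.1 fun hAinf => ?_
  obtain ⟨a, haA, ha0⟩ := (hAinf.sdiff (Set.finite_singleton 0)).nonempty
  have hsmul := hA.factorial_nsmul_mem haA ha0
  by_cases hchar : (k.factorial : D) = 0
  · have hD : ∀ s : Set D, s.Finite → (closure s : Set D).Finite :=
      fun s => finite_closure_of_nsmul_eq_zero k.factorial_ne_zero (by simp [nsmul_eq_mul, hchar])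
    exact hA.index_ne_zero hD hAinf hinf
  · simp [eq_top_of_forall_nsmul_mem hchar hsmul] at hinf
end

section
/- Let D be a division ring of prime characteristic p > 0 and let a ∈ D satisfy C_D(a) = C_D(a^p). Let δ_a : D → D be the additive map u ↦ au − ua. If the image of δ_a equals the image of δ_a ∘ δ_a, then D decomposes as the direct sum D = C_D(a) ⊕ δ_a(D) of additive groups: C_D(a) + δ_a(D) = D and C_D(a) ∩ δ_a(D) = {0}. -/
/-- Let D be a division ring of prime characteristic p with a ∈ D satisfying
C_D(a) = C_D(a^p), and let δ_a : u ↦ au − ua. If the image of δ_a equals the image of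
δ_a ∘ δ_a, then D = C_D(a) ⊕ δ_a(D) as additive groups. -/
theorem stmt_7 (D : Type*) [DivisionRing D] (p : ℕ) (hp : p.Prime) [CharP D p]
    (a : D) (ha : Subring.centralizer {a} = Subring.centralizer ({a ^ p} : Set D))
    (hrange : Set.range (fun u : D => a * u - u * a) =
      Set.range (fun u : D => a * (a * u - u * a) - (a * u - u * a) * a)) :
    (∀ d : D, ∃ c u : D, c * a = a * c ∧ d = c + (a * u - u * a)) ∧
    (∀ d : D, d * a = a * d → (∃ u : D, d = a * u - u * a) → d = 0) := by
  haveI := Fact.mk hp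
  set f : D → D := fun u => a * u - u * a with hf
  have hsub : ∀ x y : D, f (x - y) = f x - f y := by
    intro x y; simp only [hf]; noncomm_ring
  have hzero : f 0 = 0 := by simp [hf]
  -- range f = range (f ∘ f), usable form
  have hr : ∀ d : D, (∃ u, f u = d) → ∃ v, f (f v) = d := by
    intro d hd
    have h1 : d ∈ Set.range (fun u : D => a * u - u * a) := hd
    rw [hrange] at h1
    obtain ⟨v, hv⟩ := h1
    exact ⟨v, hv⟩
  -- centralizer transfer
  have hcent : ∀ x : D, x * a = a * x → x * a ^ p = a ^ p * x := by
    intro x hx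
    have hm : x ∈ Subring.centralizer ({a} : Set D) := by
      rw [Subring.mem_centralizer_iff]; rintro g hg
      rw [Set.mem_singleton_iff] at hg; subst hg; exact hx.symm
    rw [ha, Subring.mem_centralizer_iff] at hm
    exact (hm (a ^ p) rfl).symm
  have hcent' : ∀ x : D, x * a ^ p = a ^ p * x → x * a = a * x := by
    intro x hx
    have hm : x ∈ Subring.centralizer ({a ^ p} : Set D) := by
      rw [Subring.mem_centralizer_iff]; rintro g hg
      rw [Set.mem_singleton_iff] at hg; subst hg; exact hx.symm
    rw [← ha, Subring.mem_centralizer_iff] at hm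
    exact (hm a rfl).symm
  -- f^[p] = ad (a^p)
  have hpow : ∀ x : D, f^[p] x = a ^ p * x - x * a ^ p := by
    set k := Subring.center D
    set g : D →ₗ[k] D := LinearMap.mulLeft k a - LinearMap.mulRight k a with hg
    have hgap : ∀ x : D, g x = f x := by
      intro x; simp [hg, hf]
    have hiter : ∀ (n : ℕ) (x : D), (g ^ n) x = f^[n] x := by
      intro n
      induction n with
      | zero => intro x; simp
      | succ n ih =>
        intro x
        rw [pow_succ, Module.End.mul_apply, Function.iterate_succ_apply, ← hgap]
        exact ih (g x)
    intro x
    have h1 : g ^ p = LinearMap.mulLeft k (a ^ p) - LinearMap.mulRight k (a ^ p) := by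
      rw [hg, sub_pow_char_of_commute p (LinearMap.commute_mulLeft_right a a),
        LinearMap.pow_mulLeft, LinearMap.pow_mulRight]
    have h2 := hiter p x
    rw [h1] at h2
    simpa using h2.symm
  -- range f = range f^[n+1]
  have hiterr : ∀ (n : ℕ) (d : D), (∃ u, f u = d) → ∃ w, f^[n + 1] w = d := by
    intro n
    induction n with
    | zero => intro d hd; simpa using hd
    | succ n ih =>
      intro d hd
      obtain ⟨v, hv⟩ := hr d hd
      obtain ⟨w, hw⟩ := ih (f v) ⟨v, rfl⟩
      exact ⟨w, by rw [Function.iterate_succ_apply', hw, hv]⟩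
  constructor
  · -- sum part
    intro d
    obtain ⟨v, hv⟩ := hr (f d) ⟨d, rfl⟩
    refine ⟨d - f v, v, ?_, ?_⟩
    · have h0 : f (d - f v) = 0 := by rw [hsub, hv, sub_self]
      have h1 : a * (d - f v) - (d - f v) * a = 0 := h0
      rw [sub_eq_zero] at h1
      exact h1.symm
    · show d = d - f v + f v
      abel
  · -- intersection part
    intro d hcomm hu
    by_contra hd0
    obtain ⟨u, hu⟩ := hu
    -- d ∈ range f^[p]
    obtain ⟨w, hw⟩ := hiterr (p - 1) d ⟨u, hu.symm⟩
    rw [Nat.sub_add_cancel hp.one_le] at hw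
    -- 1 = f^[p] (d⁻¹ * w)
    have hdap : d * a ^ p = a ^ p * d := hcent d hcomm
    have hdinv : d⁻¹ * a ^ p = a ^ p * d⁻¹ := by
      have h2 : Commute d (a ^ p) := hdap
      exact (h2.inv_left₀)
    have h3 : f^[p] (d⁻¹ * w) = 1 := by
      rw [hpow, ← mul_assoc, ← hdinv, mul_assoc, mul_assoc, ← mul_sub, ← hpow, hw,
        inv_mul_cancel₀ hd0]
    -- so there is x with f x = 1
    obtain ⟨x, hx⟩ : ∃ x, f x = 1 := by
      have h4 := Function.iterate_succ_apply' f (p - 1) (d⁻¹ * w)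
      have h5 : (p - 1).succ = p := by have := hp.pos; omega
      rw [h5, h3] at h4
      exact ⟨_, h4.symm⟩
    -- f^[p] x = 0
    have h4 : f^[2] x = 0 := by
      show f (f x) = 0
      rw [hx]; simp [hf]
    have h5 : f^[p] x = 0 := by
      have hpe : p - 2 + 2 = p := Nat.sub_add_cancel hp.two_le
      rw [← hpe, Function.iterate_add_apply, h4, Function.iterate_fixed hzero]
    rw [hpow] at h5
    rw [sub_eq_zero] at h5
    have h6 : x * a = a * x := hcent' x h5.symm
    have h7 : (1 : D) = 0 := by
      rw [← hx]
      show a * x - x * a = 0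
      rw [h6, sub_self]
    exact one_ne_zero h7
end

section
/- Let n be a positive integer and let D be a division ring, viewed as a first-order structure in the language of rings, satisfying (†)_n. Then for every infinite subfield K of D whose underlying set is definable, D has dimension at most n as a left K-vector space. -/
/-! If `v₀, …, vₙ` were `K`-linearly independent, the `K`-spans `Hᵢ` of `{vₖ | k ≠ i}` would be
definable additive subgroups (their elements are the sums `∑ cₖ vₖ` with coefficients in the
definable set `K`). Linear independence makes `⋂ᵢ Hᵢ = 0`, whereas for every `j` the intersection
`⋂_{i ≠ j} Hᵢ` contains the infinite line `K vⱼ`, so no `j` witnesses `(†)ₙ`. -/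

/-- The chain condition (†)_n: for any definable additive subgroups H_0, …, H_n of (D,+), there
is some j ≤ n such that ⋂_{i≤n} H_i has finite index in ⋂_{i≠j} H_i. -/
def SatisfiesDagger (D : Type*) [DivisionRing D] [FirstOrder.Ring.CompatibleRing D]
    (n : ℕ) : Prop :=
  ∀ H : Fin (n + 1) → AddSubgroup D,
    (∀ i, Set.Definable₁ (Set.univ : Set D) FirstOrder.Language.ring (H i : Set D)) →
    ∃ j : Fin (n + 1),
      ((⨅ i, H i).addSubgroupOf (⨅ i ∈ ({j}ᶜ : Set (Fin (n + 1))), H i)).index ≠ 0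

open FirstOrder FirstOrder.Language Set

namespace Set

section CompatibleRing

variable {R : Type*} [Add R] [Mul R] [Neg R] [One R] [Zero R] [Ring.CompatibleRing R]
  {α : Type*} {A : Set R} {f g : (α → R) → R}

theorem DefinableFun.add (hf : A.DefinableFun ring f) (hg : A.DefinableFun ring g) :
    A.DefinableFun ring fun v => f v + g v := by
  have hadd : A.DefinableFun ring fun v : Fin 2 → R => v 0 + v 1 := by
    have h := (Term.var 0 + Term.var 1 : ring.Term (Fin 2)).definableFun_realize (M := R)
    simpa using h.of_empty
  exact DefinableFun.comp (g := fun v => ![f v, g v]) (by simp [DefinableMap, *]) hadd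

theorem DefinableFun.mul (hf : A.DefinableFun ring f) (hg : A.DefinableFun ring g) :
    A.DefinableFun ring fun v => f v * g v := by
  have hmul : A.DefinableFun ring fun v : Fin 2 → R => v 0 * v 1 := by
    have h := (Term.var 0 * Term.var 1 : ring.Term (Fin 2)).definableFun_realize (M := R)
    simpa using h.of_empty
  exact DefinableFun.comp (g := fun v => ![f v, g v]) (by simp [DefinableMap, *]) hmul

end CompatibleRing

variable {R : Type*} [Ring R] [Ring.CompatibleRing R] {α ι : Type*} {A : Set R}

theorem DefinableFun.finset_sum {f : ι → (α → R) → R} (s : Finset ι)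
    (hf : ∀ i ∈ s, A.DefinableFun ring (f i)) :
    A.DefinableFun ring fun v => ∑ i ∈ s, f i v := by
  classical
  induction s using Finset.induction_on with
  | empty =>
    simpa using ((0 : ring.Term α).definableFun_realize (M := R)).of_empty (A := A)
  | insert i s hi ih =>
    simp only [Finset.sum_insert hi]
    exact (hf i (s.mem_insert_self i)).add (ih fun j hj => hf j (Finset.mem_insert_of_mem hj))

theorem Definable₁.setOf_exists_sum_mul [Fintype ι] {K : Set R} (hK : A.Definable₁ ring K)
    (w : ι → R) (hw : ∀ j, w j ∈ A) :
    A.Definable₁ ring {x | ∃ c : ι → R, (∀ j, c j ∈ K) ∧ ∑ j, c j * w j = x} := by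
  have hcoeff : A.Definable ring {u : Fin 1 ⊕ ι → R | ∀ j, u (.inr j) ∈ K} := by
    simpa [ofPred_forall] using
      definable_iInter_of_finite fun j => hK.preimage_comp fun _ : Fin 1 => Sum.inr j
  have hsum : A.Definable ring {u : Fin 1 ⊕ ι → R | ∑ j, u (.inr j) * w j = u (.inl 0)} :=
    (DefinableFun.finset_sum _ fun j _ =>
      (DefinableFun.proj ring).mul (ring.definableFun_const _ (hw j))).ofPred_eq
        (DefinableFun.proj ring)
  simpa [Definable₁] using (hcoeff.inter hsum).exists_of_finite

end Set

theorem LinearIndependent.iInf_span_image {R M ι ι' : Type*} [Semiring R] [AddCommMonoid M]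
    [Module R M] [Nonempty ι'] {v : ι → M} (hv : LinearIndependent R v) (s : ι' → Set ι) :
    ⨅ k, Submodule.span R (v '' s k) = Submodule.span R (v '' ⋂ k, s k) := by
  simp only [Finsupp.span_image_eq_map_linearCombination, Finsupp.supported_iInter,
    Submodule.map_iInf _ hv]

theorem LinearIndependent.iInf_span_image_compl_eq_bot {R M ι : Type*} [Semiring R]
    [AddCommMonoid M] [Module R M] [Nonempty ι] {v : ι → M} (hv : LinearIndependent R v) :
    ⨅ i, Submodule.span R (v '' {i}ᶜ) = ⊥ := by
  rw [hv.iInf_span_image]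
  simp

theorem Subfield.definable₁_span_range {D : Type*} [DivisionRing D] [Ring.CompatibleRing D]
    {A : Set D} {K : Subfield D} (hK : A.Definable₁ ring (K : Set D)) {ι : Type*} [Fintype ι]
    (w : ι → D) (hw : ∀ j, w j ∈ A) :
    A.Definable₁ ring (Submodule.span K (range w) : Set D) := by
  convert hK.setOf_exists_sum_mul w hw using 1
  ext x
  simp only [SetLike.mem_coe, Submodule.mem_span_range_iff_exists_fun, mem_ofPred_eq]
  constructor
  · rintro ⟨c, rfl⟩
    exact ⟨fun j => c j, fun j => (c j).2, rfl⟩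
  · rintro ⟨c, hc, rfl⟩
    exact ⟨fun j => ⟨c j, hc j⟩, rfl⟩

theorem stmt_8_general (n : ℕ) (D : Type*) [DivisionRing D]
    [FirstOrder.Ring.CompatibleRing D]
    (hdag : SatisfiesDagger D n)
    (K : Subfield D)
    (hKinf : (K : Set D).Infinite)
    (hKdef : Set.Definable₁ (Set.univ : Set D) FirstOrder.Language.ring (K : Set D)) :
    Module.rank K D ≤ n := by
  by_contra! hlt
  obtain ⟨v, hv⟩ : ∃ v : Fin (n + 1) → D, LinearIndependent K v := by
    rwa [← Module.le_rank_iff, Nat.cast_add_one, Cardinal.natCast_add_one_le_iff]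
  let H i : AddSubgroup D := (Submodule.span K (v '' {i}ᶜ)).toAddSubgroup
  obtain ⟨j, hj⟩ := hdag H fun i => by
    simpa [H, ← Fin.range_succAbove, ← range_comp] using
      K.definable₁_span_range hKdef (v ∘ i.succAbove) fun _ => mem_univ _
  have hbot : ⨅ i, H i = ⊥ := by
    ext x
    simpa [H, AddSubgroup.mem_iInf, ← Submodule.mem_iInf] using
      SetLike.ext_iff.1 hv.iInf_span_image_compl_eq_bot x
  have hfin : ((⨅ i ∈ ({j}ᶜ : Set (Fin (n + 1))), H i : AddSubgroup D) : Set D).Finite := by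
    rw [hbot, AddSubgroup.bot_addSubgroupOf, AddSubgroup.index_bot] at hj
    have := (Nat.card_ne_zero.1 hj).2
    exact Set.toFinite _
  refine (hKinf.image (mul_left_injective₀ (hv.ne_zero j)).injOn).mono ?_ hfin
  rintro _ ⟨k, hk, rfl⟩
  simp only [SetLike.mem_coe, AddSubgroup.mem_iInf]
  intro i hi
  exact Submodule.smul_mem _ (⟨k, hk⟩ : K) (Submodule.subset_span ⟨j, fun h => hi h.symm, rfl⟩)

/-- Let n be a positive integer and D a division ring, viewed as a first-order structure in the
language of rings, satisfying (†)_n. Then for every infinite subfield K of D whose underlying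
set is definable, D has dimension at most n as a left K-vector space. -/
theorem stmt_8 (n : ℕ) (hn : 0 < n) (D : Type*) [DivisionRing D]
    [FirstOrder.Ring.CompatibleRing D]
    (hdag : SatisfiesDagger D n)
    (K : Subfield D)
    (hcomm : ∀ x ∈ K, ∀ y ∈ K, x * y = y * x)
    (hKinf : (K : Set D).Infinite)
    (hKdef : Set.Definable₁ (Set.univ : Set D) FirstOrder.Language.ring (K : Set D)) :
    Module.rank K D ≤ n :=
  stmt_8_general n D hdag K hKinf hKdef
end

section
/- Let D be an infinite division ring, viewed as a first-order structure in the language of rings, satisfying (†)_1. Then D is commutative. -/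
set_option maxHeartbeats 1000000
set_option synthInstance.maxHeartbeats 400000

open FirstOrder FirstOrder.Language Polynomial

section Aux

variable {D : Type*} [DivisionRing D] [FirstOrder.Ring.CompatibleRing D]

lemma definable_comm (a : D) :
    Set.Definable₁ (Set.univ : Set D) Language.ring {x : D | a * x = x * a} := by
  rw [Set.Definable₁, Set.definable_iff_exists_formula_sum]
  refine ⟨Term.equal
    (Term.var (Sum.inl (⟨a, trivial⟩ : (Set.univ : Set D))) * Term.var (Sum.inr 0))
    (Term.var (Sum.inr 0) * Term.var (Sum.inl ⟨a, trivial⟩)), ?_⟩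
  ext v
  simp [Term.equal, Formula.Realize, Term.realize]

lemma definable_comm_shift (a b : D) :
    Set.Definable₁ (Set.univ : Set D) Language.ring {x : D | a * (x * b) = (x * b) * a} := by
  rw [Set.Definable₁, Set.definable_iff_exists_formula_sum]
  refine ⟨Term.equal
    (Term.var (Sum.inl (⟨a, trivial⟩ : (Set.univ : Set D))) *
      (Term.var (Sum.inr 0) * Term.var (Sum.inl ⟨b, trivial⟩)))
    ((Term.var (Sum.inr 0) * Term.var (Sum.inl ⟨b, trivial⟩)) *
      Term.var (Sum.inl ⟨a, trivial⟩)), ?_⟩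
  ext v
  simp [Term.equal, Formula.Realize, Term.realize]

/-- the additive group of the centralizer of `a` -/
def centAdd (a : D) : AddSubgroup D where
  carrier := {x : D | a * x = x * a}
  zero_mem' := by simp
  add_mem' := by intro x y hx hy; simp only [Set.mem_setOf_eq] at *
                 rw [mul_add, add_mul, hx, hy]
  neg_mem' := by intro x hx; simp only [Set.mem_setOf_eq] at *
                 rw [mul_neg, neg_mul, hx]

/-- the shifted centralizer `C(a)·b⁻¹` as additive group, defined via `x*b` -/
def centAddShift (a b : D) : AddSubgroup D where
  carrier := {x : D | a * (x * b) = (x * b) * a}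
  zero_mem' := by simp
  add_mem' := by intro x y hx hy; simp only [Set.mem_setOf_eq] at *
                 rw [add_mul, mul_add, add_mul, hx, hy]
  neg_mem' := by intro x hx; simp only [Set.mem_setOf_eq] at *
                 rw [neg_mul, mul_neg, neg_mul, hx]

lemma inv_mem_cent {a x : D} (hx : a * x = x * a) : a * x⁻¹ = x⁻¹ * a := by
  rcases eq_or_ne x 0 with rfl | hx0
  · simp
  · have e1 : x⁻¹ * (a * x) * x⁻¹ = x⁻¹ * a := by
      rw [← mul_assoc, mul_assoc (x⁻¹ * a), mul_inv_cancel₀ hx0, mul_one]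
    have e2 : x⁻¹ * (x * a) * x⁻¹ = a * x⁻¹ := by
      rw [← mul_assoc, inv_mul_cancel₀ hx0, one_mul]
    rw [← e2, ← hx, e1]

lemma centralizer_finite (hdag : SatisfiesDagger D 1) {a b : D} (hb : a * b ≠ b * a) :
    ({x : D | a * x = x * a}).Finite := by
  have hb0 : b ≠ 0 := by rintro rfl; simp at hb
  set H : Fin 2 → AddSubgroup D := ![centAdd a, centAddShift a b⁻¹] with hH
  obtain ⟨j, hj⟩ := hdag H (by
    intro i
    fin_cases i
    · exact definable_comm a
    · exact definable_comm_shift a b⁻¹)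
  have hinf : (⨅ i, H i) = ⊥ := by
    apply le_bot_iff.mp
    intro x hx
    have hx0 : x ∈ H 0 := by exact AddSubgroup.mem_iInf.mp hx 0
    have hx1 : x ∈ H 1 := by exact AddSubgroup.mem_iInf.mp hx 1
    simp only [hH, Matrix.cons_val_zero, Matrix.cons_val_one, Matrix.head_cons] at hx0 hx1
    change a * x = x * a at hx0
    change a * (x * b⁻¹) = (x * b⁻¹) * a at hx1
    by_contra hx0'
    have hxne : x ≠ 0 := by simpa [AddSubgroup.mem_bot] using hx0'
    -- b⁻¹ = x⁻¹ * (x * b⁻¹) commutes with a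
    have h1 : a * x⁻¹ = x⁻¹ * a := inv_mem_cent hx0
    have hxb : x⁻¹ * (x * b⁻¹) = b⁻¹ := by
      rw [← mul_assoc, inv_mul_cancel₀ hxne, one_mul]
    have h2 : a * b⁻¹ = b⁻¹ * a := by
      rw [← hxb, ← mul_assoc, h1, mul_assoc, hx1, ← mul_assoc]
    have h3 : a * b = b * a := by
      have := inv_mem_cent h2
      rwa [inv_inv] at this
    exact hb h3
  -- now compute the complementary infimum
  have key : ∀ i : Fin 2, ((⊥ : AddSubgroup D).addSubgroupOf (H i)).index ≠ 0 →
      (H i : Set D).Finite := by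
    intro i hi
    rw [AddSubgroup.bot_addSubgroupOf, AddSubgroup.index_bot] at hi
    have : Finite (H i) := (Nat.card_ne_zero.mp hi).2
    exact (H i : Set D).toFinite
  have hcompl : ∀ j : Fin 2, (⨅ i ∈ ({j}ᶜ : Set (Fin 2)), H i) = H (1 - j) := by
    intro j
    apply le_antisymm
    · exact iInf₂_le (1 - j) (by fin_cases j <;> simp)
    · apply le_iInf₂
      intro i hi
      have : i = 1 - j := by fin_cases j <;> fin_cases i <;> simp_all
      rw [this]
  rw [hinf, hcompl j] at hj
  have hfin : (H (1 - j) : Set D).Finite := key _ hj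
  have hK : ∀ i : Fin 2, (H i : Set D).Finite → ({x : D | a * x = x * a}).Finite := by
    intro i hfin
    fin_cases i
    · exact hfin
    · -- H 1 = centAddShift; K ⊆ (· * b⁻¹) '' H1
      apply Set.Finite.subset (hfin.image (· * b⁻¹))
      intro z hz
      refine ⟨z * b, ?_, by simpa using mul_inv_cancel_right₀ hb0 z⟩
      show a * (z * b * b⁻¹) = (z * b * b⁻¹) * a
      rw [mul_inv_cancel_right₀ hb0]
      exact hz
  exact hK _ hfin





-- elements of `Subring.closure {a}` commute with each other
lemma closure_singleton_comm (a : D) (x y : D) (hx : x ∈ Subring.closure {a})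
    (hy : y ∈ Subring.closure {a}) : x * y = y * x := by
  have hxa : a * x = x * a := by
    have : Subring.closure {a} ≤ Subring.centralizer {a} := by
      rw [Subring.closure_le]
      intro z hz
      rw [Set.mem_singleton_iff] at hz
      subst hz
      exact Subring.mem_centralizer_iff.mpr (fun g hg => by rw [Set.mem_singleton_iff] at hg; rw [hg])
    exact Subring.mem_centralizer_iff.mp (this hx) a rfl
  have : Subring.closure {a} ≤ Subring.centralizer {x} := by
    rw [Subring.closure_le]
    intro z hz
    rw [Set.mem_singleton_iff] at hz
    subst hz
    exact Subring.mem_centralizer_iff.mpr (fun g hg => by rw [Set.mem_singleton_iff] at hg; rw [hg, hxa])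
  exact Subring.mem_centralizer_iff.mp (this hy) x rfl



-- the key eigenvalue lemma
lemma exists_conj_in_closure {a : D} (ha : ∃ y, a * y ≠ y * a)
    (hFfin : Finite ↥(Subring.closure {a} : Subring D))
    {p : ℕ} [CharP D p] (hp : p.Prime) :
    ∃ b : D, b ≠ 0 ∧ b * a * b⁻¹ ∈ Subring.closure {a} ∧ b * a * b⁻¹ ≠ a := by
  set F : Subring D := Subring.closure {a} with hF
  letI : Fintype ↥F := Fintype.ofFinite _
  letI : DecidableEq ↥F := Classical.decEq _
  letI : CommRing ↥F :=
    { (inferInstance : Ring ↥F) with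
      mul_comm := fun x y => Subtype.ext (closure_singleton_comm a x.1 y.1 x.2 y.2) }
  letI : Field ↥F := Fintype.fieldOfDomain ↥F
  letI : ExpChar ↥F p := ExpChar.prime hp
  letI : ExpChar D p := ExpChar.prime hp
  obtain ⟨m, -, hqm⟩ := FiniteField.card ↥F p
  have haF : a ∈ F := Subring.subset_closure rfl
  letI : Algebra ↥F (Module.End ↥F D) := inferInstance
  have hsmul : ∀ (c : ↥F) (x : D), c • x = (c : D) * x := fun c x => rfl
  have coepow : ∀ (x : ↥F) (n : ℕ), ((x ^ n : ↥F) : D) = (x : D) ^ n := by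
    intro x n
    induction n with
    | zero => rw [pow_zero, pow_zero]; rfl
    | succ n ih => rw [pow_succ, pow_succ, ← ih]; rfl
  set lm : Module.End ↥F D :=
    { toFun := fun x => a * x
      map_add' := fun x y => mul_add a x y
      map_smul' := fun c x => by
        simp only [RingHom.id_apply, hsmul]
        rw [← mul_assoc, ← mul_assoc]
        congr 1
        exact (closure_singleton_comm a c.1 a c.2 haF).symm } with hlm
  set rm : Module.End ↥F D :=
    { toFun := fun x => x * a
      map_add' := fun x y => add_mul x y a
      map_smul' := fun c x => by simp only [RingHom.id_apply, hsmul, mul_assoc] } with hrm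
  set δ : Module.End ↥F D := lm - rm with hδ
  have hδapp : ∀ x : D, δ x = a * x - x * a := fun x => rfl
  have hδ0 : ∀ (hc : ∀ x : D, δ x = 0), False := by
    intro hc
    obtain ⟨y, hy⟩ := ha
    have h := hc y
    rw [hδapp] at h
    exact hy (sub_eq_zero.mp h)
  -- powers
  have hlmpow : ∀ n : ℕ, ∀ x : D, (lm ^ n) x = a ^ n * x := by
    intro n
    induction n with
    | zero =>
      intro x
      rw [pow_zero, pow_zero, one_mul]
      exact Module.End.one_apply x
    | succ n ih =>
      intro x
      rw [pow_succ, Module.End.mul_apply, show lm x = a * x from rfl, ih, ← mul_assoc, ← pow_succ]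
  have hrmpow : ∀ n : ℕ, ∀ x : D, (rm ^ n) x = x * a ^ n := by
    intro n
    induction n with
    | zero =>
      intro x
      rw [pow_zero, pow_zero, mul_one]
      exact Module.End.one_apply x
    | succ n ih =>
      intro x
      rw [pow_succ, Module.End.mul_apply, show rm x = x * a from rfl, ih, mul_assoc, ← pow_succ']
  -- char of E
  letI : ExpChar (Module.End ↥F D) p := by
    refine expChar_of_injective_ringHom (f := algebraMap ↥F (Module.End ↥F D)) ?_ p
    intro c c' h
    have h2 := congrArg (fun (f : Module.End ↥F D) => f (1:D)) h
    simp only [Module.algebraMap_end_apply, hsmul, mul_one] at h2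
    exact Subtype.ext h2
  -- a ^ q = a
  have haq : a ^ Fintype.card ↥F = a := by
    have h1 : (⟨a, haF⟩ : ↥F) ^ Fintype.card ↥F = ⟨a, haF⟩ := FiniteField.pow_card _
    have h2 := congrArg Subtype.val h1
    rwa [coepow] at h2
  have hcomm : Commute lm rm := by
    apply LinearMap.ext
    intro x
    show a * (x * a) = (a * x) * a
    rw [mul_assoc]
  have hδq : δ ^ Fintype.card ↥F = δ := by
    rw [hδ, hqm, sub_pow_expChar_pow_of_commute p m hcomm]
    congr 1 <;> apply LinearMap.ext <;> intro x
    · rw [hlmpow, ← hqm, haq]; rfl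
    · rw [hrmpow, ← hqm, haq]; rfl
  -- polynomial identity
  have hmonic : (X ^ Fintype.card ↥F - X : (↥F)[X]).Monic :=
    Polynomial.monic_X_pow_sub (by
      rw [Polynomial.degree_X]
      exact_mod_cast Fintype.one_lt_card)
  have hprod : (∏ c : ↥F, (X - C c)) = X ^ Fintype.card ↥F - X := by
    have h1 := Polynomial.prod_multiset_X_sub_C_of_monic_of_roots_card_eq hmonic
      (by rw [FiniteField.roots_X_pow_card_sub_X,
              FiniteField.X_pow_card_sub_X_natDegree_eq ↥F Fintype.one_lt_card]
          exact Finset.card_univ)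
    rw [FiniteField.roots_X_pow_card_sub_X] at h1
    exact h1
  -- evaluate at δ
  have haev : Polynomial.aeval δ ((X : (↥F)[X]) ^ Fintype.card ↥F - X) = 0 := by
    rw [map_sub, map_pow, Polynomial.aeval_X, hδq, sub_self]
  -- key: some δ - c·1 is not injective for c ≠ 0
  have hnoninj : ∃ c : ↥F, c ≠ 0 ∧ ¬ Function.Injective (δ - algebraMap ↥F (Module.End ↥F D) c) := by
    by_contra hcon
    push_neg at hcon
    have hinj : ∀ s : Finset ↥F, (0 : ↥F) ∉ s →
        Function.Injective (Polynomial.aeval δ (∏ c ∈ s, (X - C c)) : Module.End ↥F D) := by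
      intro s
      induction s using Finset.induction_on with
      | empty =>
        intro _
        rw [Finset.prod_empty, map_one]
        intro x y h
        simpa using h
      | @insert c s hc ih =>
        intro h0
        rw [Finset.prod_insert hc, map_mul, map_sub, Polynomial.aeval_X, Polynomial.aeval_C]
        have h1 : ∀ z : D, (((δ - algebraMap ↥F (Module.End ↥F D) c) *
            Polynomial.aeval δ (∏ c ∈ s, (X - C c))) z) =
            (δ - algebraMap ↥F (Module.End ↥F D) c) ((Polynomial.aeval δ (∏ c ∈ s, (X - C c))) z) :=
          fun z => rfl
        intro x y hxy
        rw [h1, h1] at hxy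
        exact ih (fun hmem => h0 (Finset.mem_insert_of_mem hmem))
          (hcon c (fun hc0 => h0 (hc0 ▸ Finset.mem_insert_self c s)) hxy)
    -- write univ = insert 0 (univ.erase 0)
    have hzero_mem : (0 : ↥F) ∈ Finset.univ := Finset.mem_univ _
    have huniv : (Finset.univ : Finset ↥F) = insert 0 (Finset.univ.erase 0) := by
      rw [Finset.insert_erase hzero_mem]
    have hfact : (∏ c : ↥F, (X - C c)) =
        (∏ c ∈ Finset.univ.erase 0, (X - C c)) * X := by
      have := (Finset.prod_erase_mul (f := fun c : ↥F => (X - C c : (↥F)[X]))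
        (a := (0 : ↥F)) Finset.univ hzero_mem).symm
      rwa [map_zero, sub_zero] at this
    have h2 : (Polynomial.aeval δ ((∏ c ∈ Finset.univ.erase (0 : ↥F), (X - C c)) : (↥F)[X]) : Module.End ↥F D) * δ = 0 := by
      have := congrArg (Polynomial.aeval δ) hprod
      rw [haev, hfact, map_mul, Polynomial.aeval_X] at this
      exact this
    apply hδ0
    intro x
    have h3 : (Polynomial.aeval δ ((∏ c ∈ Finset.univ.erase (0 : ↥F), (X - C c)) : (↥F)[X]) : Module.End ↥F D) (δ x) = 0 := by
      have := congrArg (fun (f : Module.End ↥F D) => f x) h2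
      exact this
    have h4 := hinj (Finset.univ.erase (0 : ↥F)) (Finset.notMem_erase _ _)
    have h5 : (Polynomial.aeval δ ((∏ c ∈ Finset.univ.erase (0 : ↥F), (X - C c)) : (↥F)[X]) : Module.End ↥F D) 0 = 0 :=
      map_zero _
    exact h4 (h3.trans h5.symm)
  obtain ⟨c, hc0, hcnoninj⟩ := hnoninj
  rw [Function.not_injective_iff] at hcnoninj
  obtain ⟨u, v, huv, hne⟩ := hcnoninj
  set x := u - v with hx
  have hx0 : x ≠ 0 := sub_ne_zero.mpr hne
  have heig : a * x - x * a = (c : D) * x := by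
    have h1 : (δ - algebraMap ↥F (Module.End ↥F D) c) x = 0 := by
      rw [hx, map_sub, huv, sub_self]
    have h2 : (δ - algebraMap ↥F (Module.End ↥F D) c) x = (a * x - x * a) - (c : D) * x := by
      show δ x - (algebraMap ↥F (Module.End ↥F D) c) x = _
      rw [hδapp, Module.algebraMap_end_apply, hsmul]
    rw [h2] at h1
    exact sub_eq_zero.mp h1
  -- now produce b := x
  refine ⟨x, hx0, ?_, ?_⟩
  · have : x * a * x⁻¹ = a - (c : D) := by
      have h1 : a * x = (c : D) * x + x * a := sub_eq_iff_eq_add.mp heig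
      have h2 : x * a = (a - (c : D)) * x := by
        rw [sub_mul a ((c : ↥F) : D) x, h1]; abel
      rw [h2, mul_assoc, mul_inv_cancel₀ hx0, mul_one]
    rw [this]
    exact Subring.sub_mem _ haF c.2
  · intro hcontra
    have : x * a * x⁻¹ = a - (c : D) := by
      have h1 : a * x = (c : D) * x + x * a := sub_eq_iff_eq_add.mp heig
      have h2 : x * a = (a - (c : D)) * x := by
        rw [sub_mul a ((c : ↥F) : D) x, h1]; abel
      rw [h2, mul_assoc, mul_inv_cancel₀ hx0, mul_one]
    rw [this] at hcontra
    exact hc0 (Subtype.ext (sub_eq_self.mp hcontra))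



noncomputable section

lemma no_noncentral
    (hcfin : ∀ c : D, (∃ y, c * y ≠ y * c) → ({x : D | c * x = x * c}).Finite)
    {a : D} (ha : ∃ y, a * y ≠ y * a) : False := by
  classical
  set F : Subring D := Subring.closure {a} with hF
  have haF : a ∈ F := Subring.subset_closure rfl
  -- F is finite
  have hFsub : (F : Set D) ⊆ {x : D | a * x = x * a} := by
    intro z hz
    exact closure_singleton_comm a a z haF hz
  have hFfin : Finite ↥F := Set.finite_coe_iff.mpr ((hcfin a ha).subset hFsub)
  -- characteristic
  set p := ringChar D with hp
  have hp0 : p ≠ 0 := by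
    intro h0
    haveI : CharP D 0 := h0 ▸ ringChar.charP D
    haveI : CharZero D := CharP.charP_to_charZero D
    have hinj : Function.Injective (fun n : ℕ => (⟨(n : D), natCast_mem F n⟩ : ↥F)) := by
      intro n m h
      exact Nat.cast_injective (congrArg Subtype.val h)
    obtain ⟨n, m, hnm, h⟩ := Finite.exists_ne_map_eq_of_infinite
      (fun n : ℕ => (⟨(n : D), natCast_mem F n⟩ : ↥F))
    exact hnm (hinj h)
  have hprime : p.Prime := ((CharP.char_is_prime_or_zero D p).resolve_right hp0)
  -- get the conjugating element
  obtain ⟨b, hb0, hbaF, hba⟩ := exists_conj_in_closure ha hFfin hprime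
  -- b is noncentral
  have hbnc : ∃ y, b * y ≠ y * b := by
    refine ⟨a, fun h => hba ?_⟩
    rw [h, mul_assoc, mul_inv_cancel₀ hb0, mul_one]
  -- conjugation by b stabilizes F
  have hconj : ∀ g ∈ F, b * g * b⁻¹ ∈ F := by
    intro g hg
    induction hg using Subring.closure_induction with
    | mem x hx =>
      rw [Set.mem_singleton_iff] at hx
      subst hx
      exact hbaF
    | zero => simpa using Subring.zero_mem F
    | one => rw [mul_one, mul_inv_cancel₀ hb0]; exact Subring.one_mem F
    | add x y hx hy ihx ihy =>
      have : b * (x + y) * b⁻¹ = b * x * b⁻¹ + b * y * b⁻¹ := by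
        rw [mul_add, add_mul]
      rw [this]; exact Subring.add_mem F ihx ihy
    | neg x hx ihx =>
      have : b * (-x) * b⁻¹ = -(b * x * b⁻¹) := by rw [mul_neg, neg_mul]
      rw [this]; exact Subring.neg_mem F ihx
    | mul x y hx hy ihx ihy =>
      have key : (b * x * b⁻¹) * (b * y * b⁻¹) = b * (x * y) * b⁻¹ := by
        rw [mul_assoc (b*x) b⁻¹ (b*y*b⁻¹), mul_assoc b y b⁻¹, ← mul_assoc b⁻¹ b (y*b⁻¹),
          inv_mul_cancel₀ hb0, one_mul, ← mul_assoc (b*x) y b⁻¹, mul_assoc b x y]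
      rw [← key]; exact Subring.mul_mem F ihx ihy
  -- b has finite multiplicative order
  set B : Subring D := Subring.closure {b} with hB
  have hbB : b ∈ B := Subring.subset_closure rfl
  have hBsub : (B : Set D) ⊆ {x : D | b * x = x * b} := by
    intro z hz
    exact closure_singleton_comm b b z hbB hz
  have hBfin : Finite ↥B := Set.finite_coe_iff.mpr ((hcfin b hbnc).subset hBsub)
  letI : Fintype ↥B := Fintype.ofFinite _
  letI : CommRing ↥B :=
    { (inferInstance : Ring ↥B) with
      mul_comm := fun x y => Subtype.ext (closure_singleton_comm b x.1 y.1 x.2 y.2) }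
  letI : Field ↥B := Fintype.fieldOfDomain ↥B
  have coepowB : ∀ (x : ↥B) (n : ℕ), ((x ^ n : ↥B) : D) = (x : D) ^ n := by
    intro x n
    induction n with
    | zero => rw [pow_zero, pow_zero]; rfl
    | succ n ih => rw [pow_succ, pow_succ, ← ih]; rfl
  set r := Fintype.card ↥B - 1 with hr
  have hrpos : 0 < r := by
    have := Fintype.one_lt_card (α := ↥B)
    omega
  have hbr : b ^ r = 1 := by
    have h1 : (⟨b, hbB⟩ : ↥B) ≠ 0 := by
      intro h
      exact hb0 (congrArg Subtype.val h)
    have h2 := FiniteField.pow_card_sub_one_eq_one (⟨b, hbB⟩ : ↥B) h1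
    have h3 := congrArg Subtype.val h2
    rwa [coepowB] at h3
  have bmod : ∀ k : ℕ, b ^ k = b ^ (k % r) := by
    intro k
    conv_lhs => rw [← Nat.div_add_mod k r, pow_add, pow_mul, hbr, one_pow, one_mul]
  -- the swap lemma
  have hswap : ∀ g ∈ F, ∀ i : ℕ, ∃ g' ∈ F, b ^ i * g = g' * b ^ i := by
    intro g hg i
    induction i with
    | zero => exact ⟨g, hg, by simp⟩
    | succ i ih =>
      obtain ⟨g', hg', hgi⟩ := ih
      refine ⟨b * g' * b⁻¹, hconj g' hg', ?_⟩
      have h1 : b ^ (i+1) * g = b * (b ^ i * g) := by rw [pow_succ', mul_assoc]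
      rw [h1, hgi, ← mul_assoc b g' (b ^ i), pow_succ' b i, ← mul_assoc (b * g' * b⁻¹) b (b ^ i),
        mul_assoc (b * g') b⁻¹ b, inv_mul_cancel₀ hb0, mul_one]
  -- the finite subring
  set SRc : Set D := {z : D | ∃ f : Fin r → ↥F, z = ∑ i : Fin r, ((f i : D) * b ^ (i : ℕ))}
    with hSRc
  have hadd : ∀ z w, z ∈ SRc → w ∈ SRc → z + w ∈ SRc := by
    rintro z w ⟨f, rfl⟩ ⟨g, rfl⟩
    refine ⟨f + g, ?_⟩
    rw [← Finset.sum_add_distrib]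
    apply Finset.sum_congr rfl
    intro i _
    show (f i : D) * b ^ (i:ℕ) + (g i : D) * b ^ (i:ℕ) = ((f i + g i : ↥F) : D) * b ^ (i:ℕ)
    rw [show ((f i + g i : ↥F) : D) = (f i : D) + (g i : D) from rfl, add_mul]
  have hsum : ∀ {ι : Type} (s : Finset ι) (h : ι → D), (∀ i ∈ s, h i ∈ SRc) →
      (∑ i ∈ s, h i) ∈ SRc := by
    intro ι s h hmem
    refine Finset.sum_induction h (· ∈ SRc) hadd ⟨0, ?_⟩ hmem
    simp
  have hmono : ∀ (f : ↥F) (k : ℕ), ((f : D) * b ^ k) ∈ SRc := by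
    intro f k
    have hklt : k % r < r := Nat.mod_lt k hrpos
    refine ⟨fun i => if i = (⟨k % r, hklt⟩ : Fin r) then f else 0, ?_⟩
    have hs : (∑ i : Fin r, (((if i = (⟨k % r, hklt⟩ : Fin r) then f else 0) : ↥F) : D) * b ^ (i:ℕ))
        = (f : D) * b ^ (k % r) := by
      rw [Finset.sum_eq_single (⟨k % r, hklt⟩ : Fin r)
        (fun i _ hne => by simp [hne]) (fun h => absurd (Finset.mem_univ _) h)]
      simp
    rw [hs, ← bmod k]
  have hmul : ∀ z w, z ∈ SRc → w ∈ SRc → z * w ∈ SRc := by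
    rintro z w ⟨f, rfl⟩ ⟨g, rfl⟩
    rw [Finset.sum_mul]
    refine hsum _ _ (fun i _ => ?_)
    rw [Finset.mul_sum]
    refine hsum _ _ (fun j _ => ?_)
    obtain ⟨g', hg', hgj⟩ := hswap (g j) (g j).2 (i : ℕ)
    have : (f i : D) * b ^ (i:ℕ) * ((g j : D) * b ^ (j:ℕ)) =
        ((f i : D) * g') * b ^ ((i:ℕ) + (j:ℕ)) := by
      rw [pow_add, mul_assoc ((f i : D)) (b ^ (i:ℕ)), ← mul_assoc (b ^ (i:ℕ)), hgj,
        ← mul_assoc, ← mul_assoc, mul_assoc ((f i : D) * g')]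
    rw [this]
    exact hmono ⟨(f i : D) * g', Subring.mul_mem F (f i).2 hg'⟩ _
  set SR : Subring D :=
    { carrier := SRc
      zero_mem' := ⟨0, by simp⟩
      one_mem' := by
        have := hmono 1 0
        rwa [pow_zero, mul_one, show ((1:↥F):D) = 1 from rfl] at this
      add_mem' := fun {x y} hx hy => hadd x y hx hy
      neg_mem' := by
        rintro x ⟨f, rfl⟩
        refine ⟨-f, ?_⟩
        rw [← Finset.sum_neg_distrib]
        apply Finset.sum_congr rfl
        intro i _
        show -((f i : D) * b ^ (i:ℕ)) = ((-(f i) : ↥F) : D) * b ^ (i:ℕ)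
        rw [show ((-(f i) : ↥F) : D) = -((f i : D)) from rfl, neg_mul]
      mul_mem' := fun {x y} hx hy => hmul x y hx hy } with hSR
  have haSR : a ∈ SR := by
    have := hmono ⟨a, haF⟩ 0
    rwa [pow_zero, mul_one] at this
  have hbSR : b ∈ SR := by
    have := hmono 1 1
    rwa [pow_one, show ((1:↥F):D) = 1 from rfl, one_mul] at this
  -- SR is finite
  have hSRfin : (SR : Set D).Finite := by
    have : (SR : Set D) = Set.range (fun f : Fin r → ↥F => ∑ i : Fin r, ((f i : D) * b ^ (i : ℕ))) := by
      ext z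
      constructor
      · rintro ⟨f, rfl⟩; exact ⟨f, rfl⟩
      · rintro ⟨f, rfl⟩; exact ⟨f, rfl⟩
    rw [this]
    exact Set.finite_range _
  -- the subring generated by a and b
  set R : Subring D := Subring.closure {a, b} with hRdef
  have hRle : R ≤ SR := by
    rw [hRdef, Subring.closure_le]
    rintro z (hz | hz)
    · exact hz ▸ haSR
    · rw [Set.mem_singleton_iff] at hz; exact hz ▸ hbSR
  have haR : a ∈ R := Subring.subset_closure (Or.inl rfl)
  have hbR : b ∈ R := Subring.subset_closure (Or.inr rfl)
  have hRfin : Finite ↥R := Set.Finite.to_subtype (hSRfin.subset hRle)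
  letI : Fintype ↥R := Fintype.ofFinite _
  letI : DivisionRing ↥R := Fintype.divisionRingOfIsDomain ↥R
  letI : Field ↥R := littleWedderburn ↥R
  have hab : a * b = b * a := by
    have h1 : (⟨a, haR⟩ : ↥R) * ⟨b, hbR⟩ = ⟨b, hbR⟩ * ⟨a, haR⟩ := mul_comm _ _
    exact congrArg Subtype.val h1
  apply hba
  rw [← hab, mul_assoc, mul_inv_cancel₀ hb0, mul_one]

end


end Aux

/-- Let D be an infinite division ring, viewed as a first-order structure in the language of
rings, satisfying (†)_1. Then D is commutative. -/
theorem stmt_10 (D : Type*) [DivisionRing D] [Infinite D]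
    [FirstOrder.Ring.CompatibleRing D]
    (hdag : SatisfiesDagger D 1) :
    ∀ x y : D, x * y = y * x := by
  intro x y
  by_contra hxy
  have hcfin : ∀ c : D, (∃ z, c * z ≠ z * c) → ({w : D | c * w = w * c}).Finite := by
    rintro c ⟨z, hz⟩
    exact centralizer_finite hdag hz
  exact no_noncentral hcfin ⟨y, hxy⟩
end

section
/- Let n be a positive integer and let D be an infinite division ring, viewed as a first-order structure in the language of rings, satisfying (†)_n. Then every strictly descending chain F_0 ⊋ F_1 ⊋ ⋯ ⊋ F_{k−1} of infinite definable subfields of D satisfies k ≤ ⌊log₂(n)⌋ + 1. -/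
/-!
If `F₀ ⊋ F₁ ⊋ ⋯ ⊋ Fₘ` are subfields and `aᵢ ∈ Fᵢ \ Fᵢ₊₁`, the `2^m` ordered monomials
`a^η = ∏_{η i} aᵢ` are right linearly independent over `K = Fₘ`: writing a relation as
`X + a₀ Y = 0` with `X, Y ∈ F₁` forces `Y = 0` (otherwise `a₀ = -X Y⁻¹ ∈ F₁`), and one inducts.
If `2^m > n`, embed `{0, …, n}` into the monomials by `e` and let `Hᵢ` be the right `K`-span of all
monomials except `a^(e i)`; it is definable. For every `j`, `⋂_{i ≠ j} Hᵢ` contains `a^(e j) K`,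
which meets `Hⱼ` only in `0`; as `K` is infinite, `⋂ Hᵢ` has infinite index in `⋂_{i ≠ j} Hᵢ`,
contradicting (†)ₙ. Hence a chain of length `k = m + 1` has `2^m ≤ n`.
-/

open FirstOrder FirstOrder.Language FirstOrder.Ring Submodule

theorem AddSubgroup.relIndex_eq_zero_of_disjoint {G : Type*} [AddGroup G]
    {A B L : AddSubgroup G} [Infinite L] (hLB : L ≤ B) (hLA : Disjoint L A) :
    A.relIndex B = 0 :=
  relIndex_eq_zero_of_le_right hLB <| by
    rw [← inf_relIndex_right, hLA.symm.eq_bot, relIndex_bot_left, Nat.card_eq_zero_of_infinite]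

theorem LinearIndependent.relIndex_iInf_span_compl_eq_zero {R M ι κ : Type*} [Ring R]
    [Infinite R] [AddCommGroup M] [Module R M] {v : ι → M} (hv : LinearIndependent R v)
    (e : κ ↪ ι) (j : κ) :
    (⨅ i, (span R (v '' {e i}ᶜ)).toAddSubgroup).relIndex
      (⨅ i ∈ ({j}ᶜ : Set κ), (span R (v '' {e i}ᶜ)).toAddSubgroup) = 0 := by
  have : Infinite (R ∙ v (e j)).toAddSubgroup :=
    Infinite.of_injective (fun r => ⟨r • v (e j), mem_span_singleton.2 ⟨r, rfl⟩⟩)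
      fun r s h => hv.smul_left_injective _ (congrArg Subtype.val h)
  refine AddSubgroup.relIndex_eq_zero_of_disjoint (L := (R ∙ v (e j)).toAddSubgroup) ?_ ?_
  · refine le_iInf₂ fun i hi => span_mono ?_
    exact Set.singleton_subset_iff.2 ⟨e j, e.injective.ne (Ne.symm hi), rfl⟩
  · have hdisj := hv.disjoint_span_image (disjoint_compl_right (a := {e j}))
    rw [Set.image_singleton] at hdisj
    refine Disjoint.mono_right (iInf_le _ j) ?_
    exact AddSubgroup.disjoint_def.2 fun hx hy => disjoint_def.1 hdisj _ hx hy

section Monoid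

variable {M : Type*} [Monoid M]

def orderedMonomial {m : ℕ} (a : Fin m → M) (η : Fin m → Bool) : M :=
  (List.ofFn fun i => if η i then a i else 1).prod

@[simp]
theorem orderedMonomial_zero (a : Fin 0 → M) (η : Fin 0 → Bool) : orderedMonomial a η = 1 := rfl

theorem orderedMonomial_cons {m : ℕ} (a : Fin (m + 1) → M) (b : Bool) (η : Fin m → Bool) :
    orderedMonomial a (Fin.cons b η) = (if b then a 0 else 1) * orderedMonomial (Fin.tail a) η := by
  simp [orderedMonomial, List.ofFn_succ, Fin.tail]

theorem orderedMonomial_mem {S : Type*} [SetLike S M] [SubmonoidClass S M] {s : S} {m : ℕ}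
    {a : Fin m → M} (ha : ∀ i, a i ∈ s) (η : Fin m → Bool) : orderedMonomial a η ∈ s :=
  list_prod_mem <| List.forall_mem_ofFn_iff.2 fun i => by
    split
    · exact ha i
    · exact one_mem s

end Monoid

section DivisionRing

variable {D : Type*} [DivisionRing D]

theorem Subfield.eq_zero_of_add_mul_eq_zero {G : Subfield D} {x X Y : D} (hx : x ∉ G)
    (hX : X ∈ G) (hY : Y ∈ G) (h : X + x * Y = 0) : Y = 0 := by
  by_contra hY0
  have hx' : x = -X * Y⁻¹ := (eq_mul_inv_iff_mul_eq₀ hY0).2 (eq_neg_of_add_eq_zero_right h)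
  exact hx (hx' ▸ mul_mem (neg_mem hX) (inv_mem hY))

theorem eq_zero_of_sum_orderedMonomial_mul_eq_zero {m : ℕ} {a : Fin m → D} {G : Fin m → Subfield D}
    {K : Subfield D} (hK : ∀ i, K ≤ G i) (haG : ∀ i j, i < j → a j ∈ G i) (ha : ∀ i, a i ∉ G i)
    {c : (Fin m → Bool) → D} (hc : ∀ η, c η ∈ K) (h : ∑ η, orderedMonomial a η * c η = 0)
    (η : Fin m → Bool) : c η = 0 := by
  induction m with
  | zero =>
    rw [Fintype.sum_unique, orderedMonomial_zero, one_mul] at h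
    exact Subsingleton.elim _ η ▸ h
  | succ m ih =>
    set X : Bool → D := fun b => ∑ η', orderedMonomial (Fin.tail a) η' * c (Fin.cons b η')
    have hsplit : X false + a 0 * X true = 0 := by
      rw [← h, ← (Fin.consEquiv fun _ => Bool).sum_comp, Fintype.sum_prod_type, Fintype.sum_bool,
        add_comm]
      simp [X, Fin.consEquiv, orderedMonomial_cons, Finset.mul_sum, mul_assoc]
    have hXG : ∀ b, X b ∈ G 0 := fun b =>
      sum_mem fun η' _ => mul_mem
        (orderedMonomial_mem (fun i => haG 0 i.succ (Fin.succ_pos i)) η')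
        (hK 0 (hc _))
    have hX : ∀ b, X b = 0 := by
      have htrue := Subfield.eq_zero_of_add_mul_eq_zero (ha 0) (hXG false) (hXG true) hsplit
      rw [htrue, mul_zero, add_zero] at hsplit
      exact fun b => b.casesOn hsplit htrue
    rw [← Fin.cons_self_tail η]
    exact ih (G := fun i => G i.succ) (fun i => hK i.succ)
      (fun i j hij => haG i.succ j.succ (Fin.succ_lt_succ_iff.2 hij)) (fun i => ha i.succ)
      (fun η' => hc _) (hX (η 0)) (Fin.tail η)

theorem linearIndependent_orderedMonomial {m : ℕ} {a : Fin m → D} {G : Fin m → Subfield D}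
    {K : Subfield D} (hK : ∀ i, K ≤ G i) (haG : ∀ i j, i < j → a j ∈ G i)
    (ha : ∀ i, a i ∉ G i) : LinearIndependent K.toSubring.op (orderedMonomial a) := by
  refine Fintype.linearIndependent_iff.2 fun g hg η => ?_
  have := eq_zero_of_sum_orderedMonomial_mul_eq_zero hK haG ha (c := fun η => (g η : Dᵐᵒᵖ).unop)
    (fun η => (g η).2) (by simpa [Subring.smul_def, MulOpposite.smul_eq_mul_unop] using hg) η
  exact Subtype.ext (MulOpposite.unop_injective this)

theorem StrictAnti.exists_linearIndependent_orderedMonomial {m : ℕ} {F : Fin (m + 1) → Subfield D}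
    (hF : StrictAnti F) : ∃ a : Fin m → D, LinearIndependent (F (Fin.last m)).toSubring.op
      (orderedMonomial a) := by
  choose a haF haG using fun i : Fin m =>
    SetLike.exists_of_lt (hF (Fin.castSucc_lt_succ (i := i)))
  exact ⟨a, linearIndependent_orderedMonomial (fun i => hF.antitone (Fin.le_last _))
    (fun i j hij => hF.antitone (Fin.succ_le_castSucc_iff.2 hij) (haF j)) haG⟩

end DivisionRing

section Definability

variable {R : Type*} [Ring R] [CompatibleRing R]

theorem realize_list_sum {α : Type*} (v : α → R) (l : List (ring.Term α)) :
    l.sum.realize v = (l.map (Term.realize v)).sum := by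
  induction l with
  | nil => exact realize_zero v
  | cons t l ih => simp [realize_add, ih]

theorem definable_setOf_exists_sum_mul {ι : Type*} [Fintype ι] (c : ι → R) {K : Set R}
    (hK : Set.Definable₁ Set.univ ring K) :
    Set.Definable₁ Set.univ ring {x : R | ∃ y : ι → R, (∀ i, y i ∈ K) ∧ ∑ i, c i * y i = x} := by
  have hmem (i : ι) : Set.Definable Set.univ ring {v : ι ⊕ Fin 1 → R | v (.inl i) ∈ K} :=
    hK.preimage_comp fun _ : Fin 1 => Sum.inl i
  have hsum : Set.Definable Set.univ ring
      {v : ι ⊕ Fin 1 → R | ∑ i, c i * v (.inl i) = v (.inr 0)} := by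
    rw [Set.definable_iff_exists_formula_sum]
    refine ⟨Term.equal ((Finset.univ.toList.map fun i =>
        Term.var (.inl ⟨c i, Set.mem_univ _⟩) * Term.var (.inr (.inl i))).sum)
      (Term.var (.inr (.inr 0))), ?_⟩
    ext v
    simp [realize_list_sum, Function.comp_def, realize_mul, Finset.sum_map_toList]
  unfold Set.Definable₁
  convert ((Set.definable_biInter_finset hmem Finset.univ).inter hsum).image_comp
    (fun _ : Fin 1 => (.inr 0 : ι ⊕ Fin 1)) using 1
  ext x
  simp only [Set.mem_ofPred_eq, Set.mem_image, Set.mem_inter_iff, Set.mem_iInter, Finset.mem_univ,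
    forall_const]
  constructor
  · rintro ⟨y, hy, hyx⟩
    refine ⟨Sum.elim y fun _ => x 0, ⟨hy, hyx⟩, funext fun i => ?_⟩
    rw [Subsingleton.elim i 0]
    rfl
  · rintro ⟨v, ⟨hv, hvx⟩, rfl⟩
    exact ⟨v ∘ .inl, hv, hvx⟩

end Definability

/-- A right `K`-span is encoded as a span over `K.toSubring.op`, which acts on `R` by right
multiplication. -/
theorem definable_span_image {R : Type*} [DivisionRing R] [CompatibleRing R] {K : Subfield R}
    (hK : Set.Definable₁ Set.univ ring (K : Set R)) {ι : Type*} [Finite ι] (v : ι → R)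
    (s : Set ι) : Set.Definable₁ Set.univ ring (span K.toSubring.op (v '' s) : Set R) := by
  have := Fintype.ofFinite s
  convert definable_setOf_exists_sum_mul (fun i : s => v i) hK using 1
  ext x
  rw [SetLike.mem_coe, Set.image_eq_range, mem_span_range_iff_exists_fun]
  constructor
  · rintro ⟨g, hg⟩
    exact ⟨fun i => (g i : Rᵐᵒᵖ).unop, fun i => (g i).2, by
      simpa [Subring.smul_def, MulOpposite.smul_eq_mul_unop] using hg⟩
  · rintro ⟨y, hy, hyx⟩
    exact ⟨fun i => ⟨.op (y i), hy i⟩, by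
      simpa [Subring.smul_def, MulOpposite.smul_eq_mul_unop] using hyx⟩

theorem stmt_11_general (n : ℕ) (D : Type*) [DivisionRing D]
    [FirstOrder.Ring.CompatibleRing D]
    (hdag : SatisfiesDagger D n)
    (k : ℕ) (F : Fin k → Subfield D)
    (hinf : ∀ i, ((F i : Set D)).Infinite)
    (hdef : ∀ i, Set.Definable₁ (Set.univ : Set D) FirstOrder.Language.ring (F i : Set D))
    (hchain : ∀ i j : Fin k, i < j → F j < F i) :
    k ≤ Nat.log 2 n + 1 := by
  by_contra! hk
  set m := Nat.log 2 n + 1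
  obtain ⟨a, ha⟩ := (StrictAnti.comp_strictMono hchain
    (Fin.strictMono_castLE hk)).exists_linearIndependent_orderedMonomial
  set K := (F ∘ Fin.castLE hk) (Fin.last m)
  have : Infinite K := (hinf _).to_subtype
  have : Infinite K.toSubring.op :=
    Infinite.of_injective (β := K) _ K.toSubring.addEquivOp.injective
  obtain ⟨e⟩ : Nonempty (Fin (n + 1) ↪ (Fin m → Bool)) := by
    rw [Function.Embedding.nonempty_iff_card_le]
    simpa using Nat.lt_pow_succ_log_self one_lt_two n
  obtain ⟨j, hj⟩ :=
    hdag (fun i => (span K.toSubring.op (orderedMonomial a '' {e i}ᶜ)).toAddSubgroup)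
      fun i => definable_span_image (hdef _) _ _
  exact hj (ha.relIndex_iInf_span_compl_eq_zero e j)

/-- Let n be a positive integer and D an infinite division ring, viewed as a first-order
structure in the language of rings, satisfying (†)_n. Then every strictly descending chain
F_0 ⊋ F_1 ⊋ ⋯ ⊋ F_{k−1} of infinite definable (commutative) subfields of D has length
k ≤ ⌊log₂(n)⌋ + 1. -/
theorem stmt_11 (n : ℕ) (hn : 0 < n) (D : Type*) [DivisionRing D] [Infinite D]
    [FirstOrder.Ring.CompatibleRing D]
    (hdag : SatisfiesDagger D n)
    (k : ℕ) (F : Fin k → Subfield D)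
    (hcomm : ∀ i, ∀ x ∈ F i, ∀ y ∈ F i, x * y = y * x)
    (hinf : ∀ i, ((F i : Set D)).Infinite)
    (hdef : ∀ i, Set.Definable₁ (Set.univ : Set D) FirstOrder.Language.ring (F i : Set D))
    (hchain : ∀ i j : Fin k, i < j → F j < F i) :
    k ≤ Nat.log 2 n + 1 :=
  stmt_11_general n D hdag k F hinf hdef hchain
end

section
/- Let D be a division ring, let n be a natural number, and let K be an infinite subfield of D such that the dimension of D as a left K-vector space is at least n + 1 (possibly infinite). Then there exist left K-subspaces H_0, …, H_n of D such that for every j ≤ n the additive subgroup ⋂_{i≤n} H_i has infinite index in ⋂_{i≠j} H_i. -/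
/-!
Pick `K`-linearly independent `v₀, …, vₙ` in `D` and linear functionals `fᵢ : D → K` with
`fᵢ vⱼ = δᵢⱼ`, and take `Hᵢ = ker fᵢ`. Then `vⱼ` lies in `⋂_{i ≠ j} Hᵢ` but not in `Hⱼ`,
so the quotient `(⋂_{i ≠ j} Hᵢ) / (⋂ᵢ Hᵢ)` is a nonzero `K`-vector space, hence infinite
since `K` is.
-/

theorem Submodule.relIndex_toAddSubgroup_eq_zero_of_not_le {K V : Type*} [DivisionRing K]
    [Infinite K] [AddCommGroup V] [Module K V] {p q : Submodule K V} (h : ¬q ≤ p) :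
    p.toAddSubgroup.relIndex q.toAddSubgroup = 0 := by
  have : Nontrivial (q ⧸ p.comap q.subtype) :=
    Submodule.Quotient.nontrivial_iff.mpr fun htop => h fun x hx => by
      simpa using (htop ▸ Submodule.mem_top : (⟨x, hx⟩ : q) ∈ p.comap q.subtype)
  exact AddSubgroup.index_eq_zero_iff_infinite.mpr
    (Module.Free.infinite K (q ⧸ p.comap q.subtype))

theorem Submodule.toAddSubgroup_iInf {R M : Type*} [Ring R] [AddCommGroup M] [Module R M]
    {ι : Sort*} (p : ι → Submodule R M) :
    (⨅ i, p i).toAddSubgroup = ⨅ i, (p i).toAddSubgroup :=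
  AddSubgroup.ext fun x => by simp [Submodule.mem_iInf, AddSubgroup.mem_iInf]

theorem LinearIndependent.exists_linearMap_apply_eq_single {K V ι : Type*} [DivisionRing K]
    [AddCommGroup V] [Module K V] [DecidableEq ι] {v : ι → V} (hv : LinearIndependent K v) :
    ∃ f : ι → V →ₗ[K] K, ∀ i j, f i (v j) = (Pi.single j 1 : ι → K) i := by
  obtain ⟨g, hg⟩ := (Finsupp.linearCombination K v).exists_leftInverse_of_injective
    (LinearMap.ker_eq_bot.mpr hv)
  refine ⟨fun i => Finsupp.lapply i ∘ₗ g, fun i j => ?_⟩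
  have hgv : g (v j) = Finsupp.single j 1 := by
    simpa using LinearMap.congr_fun hg (Finsupp.single j 1)
  simp [hgv, Finsupp.single_apply, Pi.single_apply, eq_comm]

theorem stmt_12_general (D : Type*) [DivisionRing D] (n : ℕ) (K : Subfield D)
    (hKinf : (K : Set D).Infinite)
    (hdim : (n + 1 : Cardinal) ≤ Module.rank K D) :
    ∃ H : Fin (n + 1) → Submodule K D,
      ∀ j : Fin (n + 1),
        ((⨅ i, (H i).toAddSubgroup).addSubgroupOf
          (⨅ i ∈ ({j}ᶜ : Set (Fin (n + 1))), (H i).toAddSubgroup)).index = 0 := by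
  have : Infinite K := hKinf.to_subtype
  obtain ⟨v, hv⟩ := Module.le_rank_iff.mp (by exact_mod_cast hdim)
  obtain ⟨f, hf⟩ := hv.exists_linearMap_apply_eq_single
  refine ⟨fun i => LinearMap.ker (f i), fun j => ?_⟩
  have hq : v j ∈ ⨅ i ∈ ({j}ᶜ : Set (Fin (n + 1))), LinearMap.ker (f i) := by
    simp +contextual [Submodule.mem_iInf, hf]
  have hp : v j ∉ ⨅ i, LinearMap.ker (f i) := fun h => by
    simpa [hf] using (Submodule.mem_iInf _).mp h j
  -- `simp` cannot rewrite here: the subgroup appears in the type of `addSubgroupOf`.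
  have hB : ⨅ i ∈ ({j}ᶜ : Set (Fin (n + 1))), (LinearMap.ker (f i)).toAddSubgroup =
      (⨅ i ∈ ({j}ᶜ : Set (Fin (n + 1))), LinearMap.ker (f i)).toAddSubgroup := by
    simp only [Submodule.toAddSubgroup_iInf]
  rw [hB, ← Submodule.toAddSubgroup_iInf]
  exact Submodule.relIndex_toAddSubgroup_eq_zero_of_not_le fun hle => hp (hle hq)

/-- Let D be a division ring, n a natural number, and K an infinite (commutative) subfield of D
such that the dimension of D as a left K-vector space is at least n + 1. Then there exist left
K-subspaces H_0, …, H_n of D such that for every j ≤ n the additive subgroup ⋂_{i≤n} H_i has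
infinite index in ⋂_{i≠j} H_i. -/
theorem stmt_12 (D : Type*) [DivisionRing D] (n : ℕ) (K : Subfield D)
    (hcomm : ∀ x ∈ K, ∀ y ∈ K, x * y = y * x)
    (hKinf : (K : Set D).Infinite)
    (hdim : (n + 1 : Cardinal) ≤ Module.rank K D) :
    ∃ H : Fin (n + 1) → Submodule K D,
      ∀ j : Fin (n + 1),
        ((⨅ i, (H i).toAddSubgroup).addSubgroupOf
          (⨅ i ∈ ({j}ᶜ : Set (Fin (n + 1))), (H i).toAddSubgroup)).index = 0 :=
  stmt_12_general D n K hKinf hdim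
end

section
/- Let N be a nontrivial abelian group (written additively) and let H be an abelian group acting on N by group automorphisms such that the action of H on N ∖ {0} is regular: for all nonzero a, b ∈ N there is a unique h ∈ H with h • a = b. Fix e ∈ N ∖ {0}. Then N carries the structure of a (commutative) field whose additive group is the given group structure on N, whose multiplicative identity is e, and whose multiplication is given by a · b = h_a • b for a ≠ 0, where h_a is the unique element of H with h_a • e = a, and by 0 · b = 0. -/
/-- Let N be a nontrivial abelian group and H an abelian group acting on N by group
automorphisms such that the action on N ∖ {0} is regular. Fix e ∈ N ∖ {0}. Then N carries a
field structure whose additive group is the given one, whose multiplicative identity is e, and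
whose multiplication is a · b = h_a • b for a ≠ 0 (where h_a • e = a), and 0 · b = 0. -/
theorem stmt_15 (N : Type*) [AddCommGroup N] (hN : ∃ x : N, x ≠ 0)
    (H : Type*) [CommGroup H] [DistribMulAction H N]
    (hreg : ∀ a b : N, a ≠ 0 → b ≠ 0 → ∃! h : H, h • a = b)
    (e : N) (he : e ≠ 0) :
    ∃ F : Field N,
      F.zero = 0 ∧
      (∀ a b : N, F.add a b = a + b) ∧
      F.one = e ∧
      (∀ a b : N, a ≠ 0 → ∀ h : H, h • e = a → F.mul a b = h • b) ∧
      (∀ b : N, F.mul 0 b = 0) := by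
  classical
  have smul_ne : ∀ (h : H) (b : N), b ≠ 0 → h • b ≠ 0 := by
    intro h b hb hcon
    apply hb
    have : (h⁻¹ : H) • (h • b) = b := by rw [smul_smul, inv_mul_cancel, one_smul]
    rw [hcon, smul_zero] at this
    exact this.symm
  let hm : ∀ a : N, a ≠ 0 → H := fun a ha => (hreg e a he ha).choose
  have hm_spec : ∀ a (ha : a ≠ 0), hm a ha • e = a := fun a ha => (hreg e a he ha).choose_spec.1
  have hm_uniq : ∀ a (ha : a ≠ 0) (h : H), h • e = a → h = hm a ha :=
    fun a ha h hh => (hreg e a he ha).choose_spec.2 h hh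
  let mul : N → N → N := fun a b => if ha : a = 0 then 0 else hm a ha • b
  have mul_def : ∀ a b (ha : a ≠ 0), mul a b = hm a ha • b := by
    intro a b ha; simp [mul, ha]
  have mul0 : ∀ b, mul 0 b = 0 := by intro b; simp [mul]
  have mulz : ∀ a, mul a 0 = 0 := by
    intro a
    by_cases ha : a = 0
    · simp [mul, ha]
    · rw [mul_def a 0 ha, smul_zero]
  have mul_ne : ∀ a b, a ≠ 0 → b ≠ 0 → mul a b ≠ 0 := by
    intro a b ha hb
    rw [mul_def a b ha]
    exact smul_ne _ _ hb
  have hme : hm e he = 1 := (hm_uniq e he 1 (one_smul _ _)).symm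
  have one_mul' : ∀ b, mul e b = b := by
    intro b; rw [mul_def e b he, hme, one_smul]
  have mul_comm' : ∀ a b, mul a b = mul b a := by
    intro a b
    by_cases ha : a = 0
    · rw [ha, mul0, mulz]
    by_cases hb : b = 0
    · rw [hb, mul0, mulz]
    rw [mul_def a b ha, mul_def b a hb]
    conv_lhs => rw [← hm_spec b hb]
    conv_rhs => rw [← hm_spec a ha]
    rw [smul_smul, smul_smul, mul_comm]
  have hm_mul : ∀ a b (ha : a ≠ 0) (hb : b ≠ 0),
      hm (mul a b) (mul_ne a b ha hb) = hm a ha * hm b hb := by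
    intro a b ha hb
    exact (hm_uniq (mul a b) (mul_ne a b ha hb) (hm a ha * hm b hb)
      (by rw [mul_smul, hm_spec b hb, ← mul_def a b ha])).symm
  have mul_assoc' : ∀ a b c, mul (mul a b) c = mul a (mul b c) := by
    intro a b c
    by_cases ha : a = 0
    · rw [ha, mul0, mul0, mul0]
    by_cases hb : b = 0
    · simp only [hb, mulz, mul0]
    by_cases hc : c = 0
    · simp only [hc, mulz]
    rw [mul_def (mul a b) c (mul_ne a b ha hb), hm_mul a b ha hb,
      mul_def a (mul b c) ha, mul_def b c hb, mul_smul]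
  have left_distrib' : ∀ a b c, mul a (b + c) = mul a b + mul a c := by
    intro a b c
    by_cases ha : a = 0
    · rw [ha, mul0, mul0, mul0, add_zero]
    rw [mul_def _ _ ha, mul_def _ _ ha, mul_def _ _ ha, smul_add]
  let inv : N → N := fun a => if ha : a = 0 then 0 else (hm a ha)⁻¹ • e
  have mul_inv_cancel' : ∀ a, a ≠ 0 → mul a (inv a) = e := by
    intro a ha
    rw [mul_def _ _ ha]
    simp only [inv, dif_neg ha]
    rw [smul_smul, mul_inv_cancel, one_smul]
  refine ⟨{
    __ := ‹AddCommGroup N›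
    mul := mul
    left_distrib := left_distrib'
    right_distrib := fun a b c => by
      show mul (a + b) c = mul a c + mul b c
      rw [mul_comm' (a+b) c, left_distrib', mul_comm' c a, mul_comm' c b]
    zero_mul := mul0
    mul_zero := mulz
    mul_assoc := mul_assoc'
    one := e
    one_mul := one_mul'
    mul_one := fun a => by show mul a e = a; rw [mul_comm', one_mul']
    mul_comm := mul_comm'
    inv := inv
    exists_pair_ne := ⟨e, 0, he⟩
    mul_inv_cancel := mul_inv_cancel'
    inv_zero := by simp [inv]
    nnqsmul := _
    qsmul := _ }, rfl, fun a b => rfl, rfl, ?_, mul0⟩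
  intro a b ha h hh
  show mul a b = h • b
  rw [mul_def a b ha, hm_uniq a ha h hh]
end
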